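/- arXiv:2006.16200 — 7 statements merged into one kernel-verified Lean document; each statement's English description precedes it below -/
import Mathlib

section
/- For every positive integer k there exists a function f : ℝ → {−1, 1} that is (k+1)-piecewise constant and satisfies E_{z∼N(0,1)}[f(z)·z^t] = 0 for every integer t with 0 ≤ t < k. -/
/-!
Let `p = X ^ k - q` be a best `L¹(N(0,1))` approximation of `X ^ k` by polynomials `q` of degree
`< k`; it exists because these form a finite-dimensional subspace of `L¹`. The zeros of `p` are
null for the Gaussian, so `s ↦ ∫ |p + s X ^ t|` is differentiable at `s = 0` with derivative
`∫ sign(p) X ^ t`, which vanishes at the minimum `s = 0`. So `f = sign p` (with `sign 0 = 1`) works: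
it changes only at the at most `k` roots of `p`.
-/

open MeasureTheory ProbabilityTheory

/-- A function `f : ℝ → ℝ` is `m`-piecewise constant if there exist at most `m - 1`
breakpoints such that `f` is constant on each open interval of their complement
(equivalently, `f x = f y` whenever no breakpoint lies between `x` and `y`). -/
def PiecewiseConst (m : ℕ) (f : ℝ → ℝ) : Prop :=
  ∃ n : ℕ, n ≤ m - 1 ∧ ∃ z : Fin n → ℝ,
    ∀ x y : ℝ, x ≤ y → (∀ i, z i ∉ Set.Icc x y) → f x = f y

open Polynomial Filter Set

theorem Submodule.exists_norm_sub_le {E : Type*} [NormedAddCommGroup E] [NormedSpace ℝ E]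
    (S : Submodule ℝ E) [FiniteDimensional ℝ S] (x : E) :
    ∃ y ∈ S, ∀ z ∈ S, ‖x - y‖ ≤ ‖x - z‖ := by
  have hcoercive : Tendsto (fun y : S => ‖x - y‖) (cocompact S) atTop :=
    tendsto_atTop_mono (fun y => by simpa [norm_sub_rev] using norm_sub_norm_le (y : E) x)
      (tendsto_atTop_add_const_right _ (-‖x‖) tendsto_norm_cocompact_atTop)
  obtain ⟨y, hy⟩ := (by fun_prop : Continuous fun y : S => ‖x - y‖).exists_forall_le hcoercive
  exact ⟨y, y.2, fun z hz => hy ⟨z, hz⟩⟩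

theorem hasDerivAt_abs_add_mul {a : ℝ} (ha : a ≠ 0) (b : ℝ) :
    HasDerivAt (fun s => |a + s * b|) ((if a < 0 then -1 else 1) * b) 0 := by
  have hlin : HasDerivAt (fun s => a + s * b) b 0 := by
    simpa using ((hasDerivAt_id (0 : ℝ)).mul_const b).const_add a
  rcases ha.lt_or_gt with hneg | hpos
  · simpa [hneg, Function.comp_def] using (hasDerivAt_abs_neg (by simpa using hneg)).comp 0 hlin
  · simpa [hpos.not_gt, Function.comp_def] using
      (hasDerivAt_abs_pos (by simpa using hpos)).comp 0 hlin

theorem integral_sign_mul_eq_zero_of_forall_integral_abs_le {α : Type*} [MeasurableSpace α]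
    {μ : Measure α} {f g : α → ℝ} (hf : Integrable f μ) (hg : Integrable g μ)
    (hf0 : ∀ᵐ x ∂μ, f x ≠ 0) (hmin : ∀ s : ℝ, ∫ x, |f x| ∂μ ≤ ∫ x, |f x + s * g x| ∂μ) :
    ∫ x, (if f x < 0 then -1 else 1) * g x ∂μ = 0 := by
  have hlip (x : α) : LipschitzWith (Real.nnabs (g x)) fun s => |f x + s * g x| :=
    LipschitzWith.of_dist_le_mul fun s s' => by
      rw [Real.coe_nnabs, Real.dist_eq, Real.dist_eq, ← abs_mul]
      exact (abs_abs_sub_abs_le_abs_sub _ _).trans_eq (congrArg abs (by ring))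
  have hsign : AEStronglyMeasurable (fun x => if f x < 0 then (-1 : ℝ) else 1) μ :=
    ((measurable_const.ite measurableSet_Iio measurable_const).comp_aemeasurable
      hf.aemeasurable).aestronglyMeasurable
  have hderiv := (hasDerivAt_integral_of_dominated_loc_of_lip (x₀ := (0 : ℝ)) univ_mem
    (Eventually.of_forall fun s => (hf.add (hg.const_mul s)).abs.aestronglyMeasurable)
    (by simpa using hf.abs) (hsign.mul hg.aestronglyMeasurable)
    (Eventually.of_forall fun x => (hlip x).lipschitzOnWith) hg
    (hf0.mono fun x hx => hasDerivAt_abs_add_mul hx (g x))).2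
  exact IsLocalMin.hasDerivAt_eq_zero (Eventually.of_forall fun s => by simpa using hmin s) hderiv

section PolynomialL1

variable {μ : Measure ℝ}

theorem Polynomial.integrable_eval (hμ : ∀ n : ℕ, Integrable (fun x => x ^ n) μ) (p : ℝ[X]) :
    Integrable (fun x => p.eval x) μ := by
  simp_rw [eval_eq_sum_range]
  exact integrable_finsetSum _ fun i _ => (hμ i).const_mul _

noncomputable def Polynomial.toL1 (hμ : ∀ n : ℕ, Integrable (fun x => x ^ n) μ) :
    ℝ[X] →ₗ[ℝ] ℝ →₁[μ] ℝ where
  toFun p := (p.integrable_eval hμ).toL1 _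
  map_add' p q := by
    rw [← Integrable.toL1_add]
    congr 1
    ext x
    simp
  map_smul' c p := by
    rw [RingHom.id_apply, ← Integrable.toL1_smul]
    congr 1
    ext x
    simp

theorem Polynomial.norm_toL1 (hμ : ∀ n : ℕ, Integrable (fun x => x ^ n) μ) (p : ℝ[X]) :
    ‖toL1 hμ p‖ = ∫ x, |p.eval x| ∂μ :=
  L1.norm_of_fun_eq_integral_norm (p.integrable_eval hμ)

theorem Polynomial.exists_forall_integral_abs_sub_le
    (hμ : ∀ n : ℕ, Integrable (fun x => x ^ n) μ) (g : ℝ[X]) (k : ℕ) :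
    ∃ q ∈ degreeLT ℝ k, ∀ q' ∈ degreeLT ℝ k,
      ∫ x, |(g - q).eval x| ∂μ ≤ ∫ x, |(g - q').eval x| ∂μ := by
  have : FiniteDimensional ℝ (degreeLT ℝ k) := (degreeLTEquiv ℝ k).symm.finiteDimensional
  obtain ⟨_, ⟨q, hq, rfl⟩, hmin⟩ :=
    ((degreeLT ℝ k).map (toL1 hμ)).exists_norm_sub_le (toL1 hμ g)
  refine ⟨q, hq, fun q' hq' => ?_⟩
  simpa only [← map_sub, norm_toL1] using hmin _ ⟨q', hq', rfl⟩

theorem Polynomial.ae_eval_ne_zero (hμ : μ ≪ volume) {p : ℝ[X]} (hp : p ≠ 0) :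
    ∀ᵐ x ∂μ, p.eval x ≠ 0 :=
  measure_eq_zero_iff_ae_notMem.1 (hμ ((p.finite_setOfPred_isRoot hp).measure_zero volume))

end PolynomialL1

theorem lt_zero_iff_of_forall_ne_zero {f : ℝ → ℝ} (hf : Continuous f) {x y : ℝ} (hxy : x ≤ y)
    (h : ∀ r ∈ Icc x y, f r ≠ 0) : f x < 0 ↔ f y < 0 := by
  constructor
  · intro hx
    by_contra! hy
    obtain ⟨r, hr, hr0⟩ := intermediate_value_Icc hxy hf.continuousOn ⟨hx.le, hy⟩
    exact h r hr hr0
  · intro hy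
    by_contra! hx
    obtain ⟨r, hr, hr0⟩ := intermediate_value_Icc' hxy hf.continuousOn ⟨hy.le, hx⟩
    exact h r hr hr0

theorem piecewiseConst_sign_of_continuous {f : ℝ → ℝ} (hf : Continuous f) {m : ℕ}
    (Z : Finset ℝ) (hZ : Z.card ≤ m - 1) (hzero : ∀ r, f r = 0 → r ∈ Z) :
    PiecewiseConst m fun x => if f x < 0 then -1 else 1 := by
  refine ⟨Z.card, hZ, fun i => Z.equivFin.symm i, fun x y hxy hno => ?_⟩
  have hne : ∀ r ∈ Icc x y, f r ≠ 0 := fun r hr hr0 => by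
    have := hno (Z.equivFin ⟨r, hzero r hr0⟩)
    simp only [Equiv.symm_apply_apply] at this
    exact this hr
  simp only [lt_zero_iff_of_forall_ne_zero hf hxy hne]

theorem Polynomial.piecewiseConst_sign {p : ℝ[X]} (hp : p ≠ 0) :
    PiecewiseConst (p.natDegree + 1) fun x => if p.eval x < 0 then -1 else 1 :=
  piecewiseConst_sign_of_continuous p.continuous p.roots.toFinset
    (p.roots.toFinset_card_le.trans p.card_roots') fun r hr => by simp [hp, hr]

theorem stmt0_general (k : ℕ) :
    ∃ f : ℝ → ℝ, (∀ z, f z = 1 ∨ f z = -1) ∧ PiecewiseConst (k + 1) f ∧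
      ∀ t : ℕ, t < k → ∫ z, f z * z ^ t ∂(gaussianReal 0 1) = 0 := by
  have hμ (n : ℕ) : Integrable (fun x => x ^ n) (gaussianReal 0 1) :=
    integrable_pow_of_mem_interior_integrableExpSet (X := id) (by simp) n
  obtain ⟨q, hq, hmin⟩ := exists_forall_integral_abs_sub_le hμ (X ^ k) k
  set p := X ^ k - q
  have hp : p.Monic := monic_X_pow_sub (mem_degreeLT.1 hq)
  have hpdeg : p.natDegree = k := by
    have hqk : q.degree < (X ^ k : ℝ[X]).degree := by rwa [degree_X_pow, ← mem_degreeLT]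
    exact natDegree_eq_of_degree_eq_some
      ((degree_sub_eq_left_of_degree_lt hqk).trans (degree_X_pow k))
  refine ⟨fun x => if p.eval x < 0 then -1 else 1,
    fun x => by by_cases h : p.eval x < 0 <;> simp [h],
    hpdeg ▸ piecewiseConst_sign hp.ne_zero, fun t ht => ?_⟩
  refine integral_sign_mul_eq_zero_of_forall_integral_abs_le (p.integrable_eval hμ) (hμ t)
    (ae_eval_ne_zero (gaussianReal_absolutelyContinuous 0 one_ne_zero) hp.ne_zero) fun s => ?_
  have hXt : C s * X ^ t ∈ degreeLT ℝ k :=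
    mem_degreeLT.2 ((degree_C_mul_X_pow_le t s).trans_lt (by exact_mod_cast ht))
  simpa [p, sub_sub_eq_add_sub, add_sub_right_comm] using hmin _ (sub_mem hq hXt)

/-- For every positive integer `k` there exists a `(k+1)`-piecewise constant function
`f : ℝ → {-1, 1}` with `E_{z ∼ N(0,1)}[f(z) z^t] = 0` for all integers `0 ≤ t < k`. -/
theorem stmt0 (k : ℕ) (hk : 0 < k) :
    ∃ f : ℝ → ℝ, (∀ z, f z = 1 ∨ f z = -1) ∧ PiecewiseConst (k + 1) f ∧
      ∀ t : ℕ, t < k → ∫ z, f z * z ^ t ∂(gaussianReal 0 1) = 0 :=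
  stmt0_general k
end

section
/- For every real constant c with 0 < c < 1/2 there exist constants a > 0 and C > 0 (depending only on c) such that for every sufficiently large integer d there exists a set S of unit vectors in ℝ^d with |S| ≥ 2^{a·d^c} and |⟨u, v⟩| ≤ C·d^{c−1/2} for every pair of distinct vectors u, v ∈ S. -/
/-!
Reed–Solomon codes give unit vectors with small inner products. Over `𝔽_p`, the polynomials
of degree `< k` form a family of `p ^ k` functions `𝔽_p → 𝔽_p`, any two of which agree in
fewer than `k` points. Normalizing the indicator vector of the graph of each of them in
`ℝ^(𝔽_p × 𝔽_p) ⊆ ℝ^d` gives unit vectors whose inner products are the numbers of agreements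
divided by `p`. With `p ≍ √d` prime and `k = ⌈d^c⌉` this gives `p ^ k ≥ 2 ^ (d^c)` vectors
with pairwise inner products at most `d^c / p ≲ d^(c - 1/2)`.
-/

open RealInnerProductSpace Finset Polynomial

section GraphVector

variable {α β ι : Type*} [Fintype α] [Fintype ι] [DecidableEq ι]

noncomputable def graphVector (e : α × β ↪ ι) (f : α → β) : EuclideanSpace ℝ ι :=
  (√(Fintype.card α))⁻¹ • ∑ x, EuclideanSpace.single (e (x, f x)) 1

variable [DecidableEq β]

lemma inner_graphVector (e : α × β ↪ ι) (f g : α → β) :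
    ⟪graphVector e f, graphVector e g⟫ = #{x | f x = g x} / Fintype.card α := by
  classical
  have hsingle (x y : α) : ⟪EuclideanSpace.single (e (x, f x)) (1 : ℝ),
      EuclideanSpace.single (e (y, g y)) 1⟫ = if x = y then (if f y = g y then 1 else 0) else 0 := by
    by_cases h : x = y
    · subst h; simp [EuclideanSpace.inner_single_left, PiLp.single_apply]
    · simp [EuclideanSpace.inner_single_left, h]
  simp only [graphVector, real_inner_smul_left, real_inner_smul_right, sum_inner, inner_sum,
    hsingle, sum_ite_eq', mem_univ, if_true, ← mul_sum, sum_boole]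
  rw [← mul_assoc, ← mul_inv, Real.mul_self_sqrt (Nat.cast_nonneg _), inv_mul_eq_div]

variable [Nonempty α]

lemma norm_graphVector (e : α × β ↪ ι) (f : α → β) : ‖graphVector e f‖ = 1 := by
  have h : ⟪graphVector e f, graphVector e f⟫ = 1 := by
    rw [inner_graphVector]; simp
  rwa [real_inner_self_eq_norm_sq, pow_eq_one_iff_of_nonneg (norm_nonneg _) two_ne_zero] at h

lemma graphVector_injective (e : α × β ↪ ι) : Function.Injective (graphVector e) := by
  intro f g hfg
  have h : ⟪graphVector e f, graphVector e g⟫ = 1 := by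
    rw [← hfg, real_inner_self_eq_norm_sq, norm_graphVector, one_pow]
  rw [inner_graphVector, div_eq_one_iff_eq (by positivity), Nat.cast_inj, ← card_univ,
    card_filter_eq_iff] at h
  exact funext fun x => h x (mem_univ x)

end GraphVector

section ReedSolomon

variable {F : Type*} [Field F] [Fintype F] [DecidableEq F]

lemma card_filter_eval_eq_lt {k : ℕ} {p q : F[X]} (hp : p ∈ degreeLT F k)
    (hq : q ∈ degreeLT F k) (hpq : p ≠ q) : #{x | p.eval x = q.eval x} < k := by
  by_contra! hk
  rw [mem_degreeLT] at hp hq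
  exact hpq <| eq_of_degrees_lt_of_eval_finset_eq _
    (hp.trans_le (by exact_mod_cast hk)) (hq.trans_le (by exact_mod_cast hk))
    (fun x hx => (mem_filter.mp hx).2)

variable (F) in
noncomputable def reedSolomon (k : ℕ) : Finset (F → F) :=
  univ.image fun a : Fin k → F => fun x => ((degreeLTEquiv F k).symm a : F[X]).eval x

lemma card_filter_eq_lt_of_mem_reedSolomon {k : ℕ} {f g : F → F} (hf : f ∈ reedSolomon F k)
    (hg : g ∈ reedSolomon F k) (hfg : f ≠ g) : #{x | f x = g x} < k := by
  obtain ⟨a, -, rfl⟩ := mem_image.mp hf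
  obtain ⟨b, -, rfl⟩ := mem_image.mp hg
  exact card_filter_eval_eq_lt (Submodule.coe_mem _) (Submodule.coe_mem _)
    fun h => hfg (by rw [h])

lemma card_reedSolomon {k : ℕ} (hk : k ≤ Fintype.card F) :
    #(reedSolomon F k) = Fintype.card F ^ k := by
  rw [reedSolomon, card_image_of_injective, card_univ, Fintype.card_fun, Fintype.card_fin]
  intro a b hab
  by_contra hne
  have hlt := card_filter_eval_eq_lt (Submodule.coe_mem ((degreeLTEquiv F k).symm a))
    (Submodule.coe_mem ((degreeLTEquiv F k).symm b)) (by simpa using hne)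
  simp only [congrFun hab, filter_true, card_univ] at hlt
  omega

end ReedSolomon

lemma exists_unit_vectors_abs_inner_le_of_finiteField (F : Type*) [Field F] [Fintype F]
    [DecidableEq F] {ι : Type*} [Fintype ι] [DecidableEq ι] (e : F × F ↪ ι) {k : ℕ}
    (hk : k ≤ Fintype.card F) :
    ∃ S : Finset (EuclideanSpace ℝ ι), #S = Fintype.card F ^ k ∧ (∀ v ∈ S, ‖v‖ = 1) ∧
      ∀ u ∈ S, ∀ v ∈ S, u ≠ v → |⟪u, v⟫| ≤ ((k - 1 : ℕ) : ℝ) / Fintype.card F := by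
  refine ⟨(reedSolomon F k).image (graphVector e), ?_, ?_, ?_⟩
  · rw [card_image_of_injective _ (graphVector_injective e), card_reedSolomon hk]
  · simp only [mem_image]
    rintro _ ⟨f, -, rfl⟩
    exact norm_graphVector e f
  · simp only [mem_image]
    rintro _ ⟨f, hf, rfl⟩ _ ⟨g, hg, rfl⟩ hfg
    have hagree := card_filter_eq_lt_of_mem_reedSolomon hf hg (fun h => hfg (by rw [h]))
    rw [inner_graphVector, abs_of_nonneg (by positivity)]
    gcongr
    omega

lemma exists_prime_mul_self_le_and_sqrt_lt {d : ℕ} (hd : 4 ≤ d) :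
    ∃ p : ℕ, p.Prime ∧ p * p ≤ d ∧ √d < 2 * p := by
  obtain ⟨p, hp, hlt, hle⟩ := Nat.exists_prime_lt_and_le_two_mul (Nat.sqrt d / 2)
    (by have := Nat.le_sqrt.mpr (show 2 * 2 ≤ d by omega); omega)
  have hpm : p ≤ Nat.sqrt d := by omega
  refine ⟨p, hp, (Nat.mul_self_le_mul_self hpm).trans (Nat.sqrt_le d), ?_⟩
  have : d < (2 * p) * (2 * p) := (Nat.lt_succ_sqrt d).trans_le
    (Nat.mul_self_le_mul_self (by omega))
  rw [Real.sqrt_lt' (mul_pos two_pos (Nat.cast_pos.mpr hp.pos))]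
  exact_mod_cast (by nlinarith : d < (2 * p) ^ 2)

lemma eventually_natCast_rpow_le {s ε : ℝ} (hs : s < 0) (hε : 0 < ε) :
    ∀ᶠ d : ℕ in Filter.atTop, (d : ℝ) ^ s ≤ ε := by
  have h := tendsto_rpow_neg_atTop (neg_pos.mpr hs)
  rw [neg_neg] at h
  exact tendsto_natCast_atTop_atTop.eventually (h.eventually (eventually_le_nhds hε))

lemma rpow_eq_rpow_sub_half_mul_sqrt {x : ℝ} (hx : 0 < x) (c : ℝ) :
    x ^ c = x ^ (c - 1 / 2) * √x := by
  rw [Real.sqrt_eq_rpow, ← Real.rpow_add hx, sub_add_cancel]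

section Parameters

variable {c : ℝ} {d p : ℕ}

lemma ceil_rpow_le_of_sqrt_lt (hc : 0 < c) (hd : 1 ≤ d) (hsmall : (d : ℝ) ^ (c - 1 / 2) ≤ 1 / 4)
    (hp : √d < 2 * p) : ⌈(d : ℝ) ^ c⌉₊ ≤ p := by
  have hd1 : (1 : ℝ) ≤ d := by exact_mod_cast hd
  have hone := Real.one_le_rpow hd1 hc.le
  rw [← Nat.cast_le (α := ℝ)]
  calc (⌈(d : ℝ) ^ c⌉₊ : ℝ) ≤ (d : ℝ) ^ c + (d : ℝ) ^ c := by
        linarith [Nat.ceil_lt_add_one (by positivity : (0 : ℝ) ≤ (d : ℝ) ^ c)]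
    _ = 2 * (d : ℝ) ^ (c - 1 / 2) * √d := by
        rw [rpow_eq_rpow_sub_half_mul_sqrt (by linarith)]; ring
    _ ≤ 2 * (1 / 4) * √d := by gcongr
    _ ≤ p := by linarith

lemma ceil_rpow_sub_one_div_le (hd : 1 ≤ d) (hp : √d < 2 * p) :
    ((⌈(d : ℝ) ^ c⌉₊ - 1 : ℕ) : ℝ) / p ≤ 2 * (d : ℝ) ^ (c - 1 / 2) := by
  have hd0 : (0 : ℝ) < d := by exact_mod_cast hd
  have hsqrt : 0 < √(d : ℝ) := Real.sqrt_pos.mpr hd0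
  have hp0 : (0 : ℝ) < p := by linarith
  have hk : ((⌈(d : ℝ) ^ c⌉₊ - 1 : ℕ) : ℝ) ≤ (d : ℝ) ^ c :=
    (Nat.lt_ceil.mp (Nat.sub_lt (Nat.ceil_pos.mpr (by positivity)) one_pos)).le
  calc ((⌈(d : ℝ) ^ c⌉₊ - 1 : ℕ) : ℝ) / p ≤ (d : ℝ) ^ c / p := by gcongr
    _ ≤ (d : ℝ) ^ c / (√d / 2) := by gcongr; linarith
    _ = 2 * (d : ℝ) ^ (c - 1 / 2) := by
        rw [rpow_eq_rpow_sub_half_mul_sqrt hd0]; field_simp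

end Parameters

/-- For every `0 < c < 1/2` there exist `a, C > 0` such that for all sufficiently
large `d` there is a set of at least `2 ^ (a d^c)` unit vectors in `ℝ^d` whose pairwise
inner products are at most `C d^(c - 1/2)` in absolute value. -/
theorem stmt2 (c : ℝ) (hc0 : 0 < c) (hc1 : c < 1 / 2) :
    ∃ a C : ℝ, 0 < a ∧ 0 < C ∧ ∃ D : ℕ, ∀ d : ℕ, D ≤ d →
      ∃ S : Finset (EuclideanSpace ℝ (Fin d)),
        (2 : ℝ) ^ (a * (d : ℝ) ^ c) ≤ (S.card : ℝ) ∧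
        (∀ v ∈ S, ‖v‖ = 1) ∧
        ∀ u ∈ S, ∀ v ∈ S, u ≠ v → |⟪u, v⟫| ≤ C * (d : ℝ) ^ (c - 1 / 2) := by
  refine ⟨1, 2, one_pos, two_pos, ?_⟩
  obtain ⟨D, hD⟩ := Filter.eventually_atTop.mp
    (eventually_natCast_rpow_le (by linarith : c - 1 / 2 < 0) (by norm_num : (0 : ℝ) < 1 / 4))
  refine ⟨max D 4, fun d hd => ?_⟩
  have hd4 : 4 ≤ d := le_of_max_le_right hd
  obtain ⟨p, hp, hpd, hsqrt⟩ := exists_prime_mul_self_le_and_sqrt_lt hd4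
  have : Fact p.Prime := ⟨hp⟩
  set k := ⌈(d : ℝ) ^ c⌉₊
  have hkp : k ≤ Fintype.card (ZMod p) := by
    rw [ZMod.card]
    exact ceil_rpow_le_of_sqrt_lt hc0 (by omega) (hD d (le_of_max_le_left hd)) hsqrt
  obtain ⟨e⟩ := Function.Embedding.nonempty_of_card_le
    (show Fintype.card (ZMod p × ZMod p) ≤ Fintype.card (Fin d) by simpa [ZMod.card] using hpd)
  obtain ⟨S, hS, hnorm, hinner⟩ := exists_unit_vectors_abs_inner_le_of_finiteField _ e hkp
  rw [ZMod.card] at hS hinner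
  refine ⟨S, ?_, hnorm, fun u hu v hv huv =>
    (hinner u hu v hv huv).trans (ceil_rpow_sub_one_div_le (by omega) hsqrt)⟩
  calc (2 : ℝ) ^ (1 * (d : ℝ) ^ c) ≤ 2 ^ (k : ℝ) := by
        rw [one_mul]; exact Real.rpow_le_rpow_of_exponent_le one_le_two (Nat.le_ceil _)
    _ = 2 ^ k := Real.rpow_natCast 2 k
    _ ≤ (p : ℝ) ^ k := pow_le_pow_left₀ zero_le_two (by exact_mod_cast hp.two_le) k
    _ = #S := by rw [hS]; push_cast; rfl
end

section
/- Let k ≥ 1 be an integer, let f : ℝ → {−1, 1} be (k+1)-piecewise constant with E_{z∼N(0,1)}[f(z)·z^t] = 0 for every integer 0 ≤ t < k, let d ≥ 1, and let v ∈ ℝ^d be a unit vector. Then there exist β ∈ ℝ and b ∈ {−1, 1} such that the halfspace σ(x) = b·sign(⟨v, x⟩ − β) satisfies E_{x∼N(0,I_d)}[f(⟨v, x⟩)·σ(x)] ≥ 1/(2k). -/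
/-!
Projecting onto `v` reduces everything to the one-dimensional standard Gaussian `γ`. Write
`T β = ∫_{z < β} f dγ`; since `f` has mean zero, the correlation of `f` with `z ↦ sgn (z - β)`
is `-2 T β`. On each interval between consecutive breakpoints (and on the two outer rays) `f` is
constant of modulus one, so the `γ`-mass of the interval is the absolute value of the increment of
`T` across it, where `T` vanishes at `±∞`. Summing over the intervals gives `1 ≤ 2 ∑ |T s|` over
the `m ≤ k` breakpoints `s`, so some breakpoint has correlation at least `1 / m`, and choosing
`b` fixes its sign.
-/

open MeasureTheory ProbabilityTheory RealInnerProductSpace Real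

/-- The standard Gaussian measure on `ℝ^d`. -/
noncomputable def stdGaussianPi (d : ℕ) : Measure (EuclideanSpace ℝ (Fin d)) :=
  volume.withDensity fun x =>
    ENNReal.ofReal (Real.exp (-‖x‖ ^ 2 / 2) / (2 * π) ^ ((d : ℝ) / 2))

/-- `sign u = 1` if `u ≥ 0` and `-1` otherwise. -/
noncomputable def sgn (u : ℝ) : ℝ := if 0 ≤ u then 1 else -1

open scoped ENNReal
open Set

theorem lintegral_fin_prod_eq_prod {α : Type*} [MeasurableSpace α] {n : ℕ}
    (μ : Fin n → Measure α) [∀ i, SigmaFinite (μ i)]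
    (f : Fin n → α → ℝ≥0∞) (hf : ∀ i, Measurable (f i)) :
    ∫⁻ x, ∏ i, f i (x i) ∂(Measure.pi μ) = ∏ i, ∫⁻ x, f i x ∂(μ i) := by
  induction n with
  | zero => simp
  | succ n ih =>
    have hprod : Measurable fun y : Fin n → α ↦ ∏ i : Fin n, f i.succ (y i) :=
      Finset.measurable_prod _ fun i _ ↦ (hf i.succ).comp (measurable_pi_apply i)
    have hsplit : MeasurePreserving (MeasurableEquiv.piFinSuccAbove (fun _ ↦ α) 0) (Measure.pi μ)
        ((μ 0).prod (Measure.pi fun i ↦ μ i.succ)) :=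
      measurePreserving_piFinSuccAbove μ 0
    calc ∫⁻ x, ∏ i, f i (x i) ∂(Measure.pi μ)
        = ∫⁻ p, f 0 p.1 * ∏ i : Fin n, f i.succ (p.2 i)
            ∂((μ 0).prod (Measure.pi fun i ↦ μ i.succ)) := by
          rw [← hsplit.lintegral_comp (f := fun p ↦ f 0 p.1 * ∏ i : Fin n, f i.succ (p.2 i))
            (((hf 0).comp measurable_fst).mul (hprod.comp measurable_snd))]
          simp [Fin.prod_univ_succ, Fin.tail]
      _ = ∏ i, ∫⁻ x, f i x ∂(μ i) := by
          rw [lintegral_prod_mul (hf 0).aemeasurable hprod.aemeasurable,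
            ih _ _ fun i ↦ hf i.succ, Fin.prod_univ_succ]

theorem MeasureTheory.Measure.pi_withDensity_fin {α : Type*} [MeasurableSpace α] {n : ℕ}
    (μ : Fin n → Measure α) [∀ i, SigmaFinite (μ i)]
    (g : Fin n → α → ℝ≥0∞) (hg : ∀ i, Measurable (g i))
    [∀ i, SigmaFinite ((μ i).withDensity (g i))] :
    Measure.pi (fun i ↦ (μ i).withDensity (g i))
      = (Measure.pi μ).withDensity fun x ↦ ∏ i, g i (x i) := by
  refine Measure.pi_eq fun s hs ↦ ?_
  rw [withDensity_apply _ (.univ_pi hs), ← lintegral_indicator (.univ_pi hs)]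
  simp_rw [withDensity_apply _ (hs _), ← lintegral_indicator (hs _)]
  rw [← lintegral_fin_prod_eq_prod _ _ fun i ↦ (hg i).indicator (hs i)]
  congr with x
  classical
  simp [Set.indicator_apply, Finset.prod_ite_zero]

theorem MeasurableEquiv.withDensity_map {α β : Type*} [MeasurableSpace α] [MeasurableSpace β]
    (μ : Measure α) (e : α ≃ᵐ β) {ρ : β → ℝ≥0∞} (hρ : Measurable ρ) :
    (μ.map e).withDensity ρ = (μ.withDensity (ρ ∘ e)).map e := by
  ext A hA
  rw [withDensity_apply _ hA, Measure.map_apply e.measurable hA,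
    withDensity_apply _ (e.measurable hA), setLIntegral_map hA hρ e.measurable]
  rfl

theorem stdGaussianPi_density_toLp (d : ℕ) (y : Fin d → ℝ) :
    ENNReal.ofReal (Real.exp (-‖WithLp.toLp 2 y‖ ^ 2 / 2) / (2 * π) ^ ((d : ℝ) / 2))
      = ∏ i, gaussianPDF 0 1 (y i) := by
  have hpow : (2 * π) ^ ((d : ℝ) / 2) = √(2 * π) ^ d := by
    rw [Real.sqrt_eq_rpow, ← Real.rpow_natCast, ← Real.rpow_mul (by positivity)]
    ring_nf
  simp_rw [gaussianPDF, ← ENNReal.ofReal_prod_of_nonneg fun i _ ↦ gaussianPDFReal_nonneg 0 1 (y i),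
    gaussianPDFReal, EuclideanSpace.real_norm_sq_eq, Finset.prod_mul_distrib, ← Real.exp_sum, hpow]
  congr 1
  rw [Finset.prod_const, Finset.card_univ, Fintype.card_fin, ← Finset.sum_div,
    ← Finset.sum_neg_distrib]
  simp only [sub_zero, NNReal.coe_one, mul_one]
  ring

theorem stdGaussianPi_eq_stdGaussian (d : ℕ) :
    stdGaussianPi d = stdGaussian (EuclideanSpace ℝ (Fin d)) := by
  have hρ : Measurable fun x : EuclideanSpace ℝ (Fin d) ↦
      ENNReal.ofReal (Real.exp (-‖x‖ ^ 2 / 2) / (2 * π) ^ ((d : ℝ) / 2)) := by fun_prop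
  rw [stdGaussianPi, ← (PiLp.volume_preserving_toLp (Fin d)).map_eq, ← MeasurableEquiv.coe_toLp,
    MeasurableEquiv.withDensity_map _ _ hρ, ← map_pi_eq_stdGaussian]
  congr 1
  have : SigmaFinite ((volume : Measure ℝ).withDensity (gaussianPDF 0 1)) := by
    rw [← gaussianReal_of_var_ne_zero 0 one_ne_zero]; infer_instance
  rw [gaussianReal_of_var_ne_zero 0 one_ne_zero,
    Measure.pi_withDensity_fin _ _ fun _ ↦ measurable_gaussianPDF 0 1, ← volume_pi]
  exact congrArg _ (funext (stdGaussianPi_density_toLp d))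

theorem stdGaussian_map_inner {E : Type*} [NormedAddCommGroup E] [InnerProductSpace ℝ E]
    [FiniteDimensional ℝ E] [MeasurableSpace E] [BorelSpace E] {v : E} (hv : ‖v‖ = 1) :
    (stdGaussian E).map (⟪v, ·⟫) = gaussianReal 0 1 := by
  have h := IsGaussian.map_eq_gaussianReal (μ := stdGaussian E) (innerSL ℝ v)
  rw [integral_strongDual_stdGaussian, variance_dual_stdGaussian, innerSL_apply_norm, hv] at h
  simpa using h

theorem integral_comp_inner_stdGaussian {E : Type*} [NormedAddCommGroup E]
    [InnerProductSpace ℝ E] [FiniteDimensional ℝ E] [MeasurableSpace E] [BorelSpace E]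
    {v : E} (hv : ‖v‖ = 1) {g : ℝ → ℝ} (hg : Measurable g) :
    ∫ x, g ⟪v, x⟫ ∂(stdGaussian E) = ∫ z, g z ∂(gaussianReal 0 1) := by
  rw [← stdGaussian_map_inner hv, integral_map (by fun_prop) hg.aestronglyMeasurable]

theorem measurable_sgn : Measurable sgn :=
  Measurable.ite (measurableSet_le measurable_const measurable_id) measurable_const measurable_const

theorem integral_mul_sgn_sub {μ : Measure ℝ} {f : ℝ → ℝ} (hfi : Integrable f μ) (β : ℝ) :
    ∫ z, f z * sgn (z - β) ∂μ = ∫ z, f z ∂μ - 2 * ∫ z in Iio β, f z ∂μ := by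
  have h : ∀ z, f z * sgn (z - β) = f z - 2 * (Iio β).indicator f z := fun z ↦ by
    by_cases hz : z < β
    · rw [sgn, if_neg (by linarith), Set.indicator_of_mem (mem_Iio.mpr hz) f]
      ring
    · rw [sgn, if_pos (by linarith), Set.indicator_of_notMem (notMem_Iio.mpr (not_lt.mp hz)) f,
        mul_one, mul_zero, sub_zero]
  simp_rw [h]
  rw [integral_sub hfi ((hfi.indicator measurableSet_Iio).const_mul 2), integral_const_mul,
    integral_indicator measurableSet_Iio]

def ConstOnGaps (S : Finset ℝ) (f : ℝ → ℝ) : Prop :=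
  ∀ x y : ℝ, x ≤ y → (∀ t ∈ S, t ∉ Icc x y) → f x = f y

theorem PiecewiseConst.exists_constOnGaps {k : ℕ} {f : ℝ → ℝ} (hf : PiecewiseConst (k + 1) f) :
    ∃ S : Finset ℝ, S.card ≤ k ∧ ConstOnGaps S f := by
  obtain ⟨n, hn, z, hz⟩ := hf
  refine ⟨Finset.univ.image z, Finset.card_image_le.trans (by simpa using hn), ?_⟩
  exact fun x y hxy hS ↦ hz x y hxy fun i ↦ hS (z i) (Finset.mem_image_of_mem z (Finset.mem_univ i))

namespace ConstOnGaps

variable {S : Finset ℝ} {f : ℝ → ℝ}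

theorem eq_of_mem_ordConnected (hf : ConstOnGaps S f) {I : Set ℝ} (hI : I.OrdConnected)
    (hIS : ∀ t ∈ S, t ∉ I) {x y : ℝ} (hx : x ∈ I) (hy : y ∈ I) : f x = f y := by
  rcases le_total x y with hxy | hyx
  · exact hf x y hxy fun t ht htI ↦ hIS t ht (hI.out hx hy htI)
  · exact (hf y x hyx fun t ht htI ↦ hIS t ht (hI.out hy hx htI)).symm

theorem continuousOn_compl (hf : ConstOnGaps S f) : ContinuousOn f (↑S)ᶜ := by
  intro x hx
  obtain ⟨ε, hε, hball⟩ := Metric.isOpen_iff.mp S.finite_toSet.isClosed.isOpen_compl x hx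
  rw [Real.ball_eq_Ioo] at hball
  refine ((continuousAt_const (y := f x)).congr ?_).continuousWithinAt
  filter_upwards [Ioo_mem_nhds (sub_lt_self x hε) (lt_add_of_pos_right x hε)] with y hy
  exact hf.eq_of_mem_ordConnected ordConnected_Ioo (fun t ht htI ↦ hball htI ht)
    ⟨sub_lt_self x hε, lt_add_of_pos_right x hε⟩ hy

theorem measurable (hf : ConstOnGaps S f) : Measurable f := by
  classical
  rw [← Set.piecewise_same (↑S) f]
  exact (S.finite_toSet.continuousOn f).measurable_piecewise hf.continuousOn_compl
    S.finite_toSet.measurableSet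

variable {μ : Measure ℝ}

theorem integrable [IsFiniteMeasure μ] (hf : ConstOnGaps S f) (h1 : ∀ z, |f z| = 1) :
    Integrable f μ :=
  .of_bound hf.measurable.aestronglyMeasurable 1 (.of_forall fun z ↦ (h1 z).le)

theorem abs_setIntegral (hf : ConstOnGaps S f) (h1 : ∀ z, |f z| = 1) {I : Set ℝ}
    (hI : I.OrdConnected) (hIS : ∀ t ∈ S, t ∉ I) : |∫ z in I, f z ∂μ| = μ.real I := by
  rcases I.eq_empty_or_nonempty with rfl | ⟨x, hx⟩
  · simp
  rw [setIntegral_congr_fun hI.measurableSet fun y hy ↦ hf.eq_of_mem_ordConnected hI hIS hy hx,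
    setIntegral_const, smul_eq_mul, abs_mul, h1, abs_of_nonneg measureReal_nonneg, mul_one]

theorem measureReal_Iio_le [IsFiniteMeasure μ] [NullSingletonClass μ] (hf : ConstOnGaps S f)
    (h1 : ∀ z, |f z| = 1) {A : Finset ℝ} {b : ℝ} (hSA : ∀ t ∈ S, t < b → t ∈ A)
    (hAb : ∀ t ∈ A, t < b) :
    μ.real (Iio b) ≤ |∫ z in Iio b, f z ∂μ| + 2 * ∑ s ∈ A, |∫ z in Iio s, f z ∂μ| := by
  classical
  induction A using Finset.induction_on_max generalizing b with
  | empty =>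
    rw [Finset.sum_empty, mul_zero, add_zero, hf.abs_setIntegral h1 ordConnected_Iio
      fun t ht htb ↦ Finset.notMem_empty t (hSA t ht htb)]
  | insert a A hlt ih =>
    have hab : a < b := hAb a (Finset.mem_insert_self a A)
    have hgap : ∀ t ∈ S, t ∉ Ioo a b := fun t ht ⟨hat, htb⟩ ↦ by
      rcases Finset.mem_insert.mp (hSA t ht htb) with rfl | htA
      exacts [lt_irrefl t hat, (hlt t htA).not_gt hat]
    have hbelow := ih (b := a) (fun t ht hta ↦
      (Finset.mem_insert.mp (hSA t ht (hta.trans hab))).resolve_left hta.ne) hlt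
    have hdisj : Disjoint (Iio a) (Ico a b) :=
      (Iio_disjoint_Ici le_rfl).mono_right Ico_subset_Ici_self
    have hmeasure : μ.real (Iio b) = μ.real (Iio a) + μ.real (Ioo a b) := by
      rw [← Iio_union_Ico_eq_Iio hab.le, measureReal_union hdisj measurableSet_Ico,
        measureReal_congr Ioo_ae_eq_Ico]
    have hintegral : ∫ z in Iio b, f z ∂μ = ∫ z in Iio a, f z ∂μ + ∫ z in Ioo a b, f z ∂μ := by
      rw [← Iio_union_Ico_eq_Iio hab.le, setIntegral_union hdisj measurableSet_Ico
        (hf.integrable h1).integrableOn (hf.integrable h1).integrableOn,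
        setIntegral_congr_set Ioo_ae_eq_Ico]
    have hpiece : μ.real (Ioo a b) ≤ |∫ z in Iio b, f z ∂μ| + |∫ z in Iio a, f z ∂μ| := by
      rw [← hf.abs_setIntegral h1 ordConnected_Ioo hgap, eq_sub_of_add_eq' hintegral.symm]
      exact abs_sub _ _
    rw [Finset.sum_insert fun h ↦ lt_irrefl a (hlt a h)]
    linarith

theorem one_le_two_mul_sum_abs_setIntegral_Iio [IsProbabilityMeasure μ] [NullSingletonClass μ]
    (hf : ConstOnGaps S f) (h1 : ∀ z, |f z| = 1) (hmean : ∫ z, f z ∂μ = 0) :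
    1 ≤ 2 * ∑ s ∈ S, |∫ z in Iio s, f z ∂μ| := by
  rcases S.eq_empty_or_nonempty with rfl | hS
  · have h := hf.abs_setIntegral (μ := μ) h1 ordConnected_univ fun t ht ↦ absurd ht (by simp)
    rw [setIntegral_univ, hmean, probReal_univ] at h
    norm_num at h
  set b := S.max' hS
  have hupper : μ.real (Ioi b) = |∫ z in Iio b, f z ∂μ| := by
    have h := integral_add_compl (measurableSet_Iio (a := b)) (hf.integrable (μ := μ) h1)
    rw [hmean, compl_Iio, ← setIntegral_congr_set Ioi_ae_eq_Ici] at h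
    rw [← hf.abs_setIntegral h1 ordConnected_Ioi
      fun t ht htb ↦ (S.le_max' t ht).not_gt (mem_Ioi.mp htb), eq_neg_of_add_eq_zero_right h,
      abs_neg]
  have htotal : μ.real (Iio b) + μ.real (Ioi b) = 1 := by
    rw [measureReal_congr Ioi_ae_eq_Ici, ← compl_Iio, measureReal_add_measureReal_compl
      measurableSet_Iio, probReal_univ]
  have hlower := hf.measureReal_Iio_le (μ := μ) h1 (A := S.erase b)
    (fun t ht htb ↦ Finset.mem_erase.mpr ⟨htb.ne, ht⟩)
    (fun t ht ↦ (S.le_max' t (Finset.mem_of_mem_erase ht)).lt_of_ne (Finset.ne_of_mem_erase ht))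
  rw [← Finset.add_sum_erase S _ (S.max'_mem hS)]
  linarith

theorem exists_one_le_card_mul_abs_integral_mul_sgn [IsProbabilityMeasure μ]
    [NullSingletonClass μ] (hf : ConstOnGaps S f) (h1 : ∀ z, |f z| = 1) (hmean : ∫ z, f z ∂μ = 0) :
    ∃ β, 1 ≤ S.card * |∫ z, f z * sgn (z - β) ∂μ| := by
  have hsum := hf.one_le_two_mul_sum_abs_setIntegral_Iio h1 hmean
  have hcorr : ∀ β, |∫ z, f z * sgn (z - β) ∂μ| = 2 * |∫ z in Iio β, f z ∂μ| := fun β ↦ by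
    rw [integral_mul_sgn_sub (hf.integrable h1), hmean, zero_sub, abs_neg, abs_mul, abs_two]
  have hS : S.Nonempty := Finset.nonempty_of_sum_ne_zero (by intro h; rw [h] at hsum; linarith)
  obtain ⟨β, -, hβ⟩ := Finset.exists_le_of_sum_le hS (f := fun _ ↦ 1 / (S.card : ℝ))
    (g := fun β ↦ |∫ z, f z * sgn (z - β) ∂μ|) (by
      rw [Finset.sum_const, nsmul_eq_mul, mul_one_div_cancel (by exact_mod_cast hS.card_ne_zero)]
      simpa [hcorr, Finset.mul_sum] using hsum)
  refine ⟨β, ?_⟩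
  rwa [div_le_iff₀' (by exact_mod_cast hS.card_pos)] at hβ

end ConstOnGaps

theorem exists_sign_mul_eq_abs (x : ℝ) : ∃ b : ℝ, (b = 1 ∨ b = -1) ∧ b * x = |x| := by
  rcases le_total 0 x with hx | hx
  · exact ⟨1, .inl rfl, by rw [one_mul, abs_of_nonneg hx]⟩
  · exact ⟨-1, .inr rfl, by rw [neg_one_mul, abs_of_nonpos hx]⟩

theorem stmt4_general (k d : ℕ) (hk : 1 ≤ k)
    (f : ℝ → ℝ) (hf_val : ∀ z, f z = 1 ∨ f z = -1)
    (hf_pc : PiecewiseConst (k + 1) f)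
    (hmom : ∀ t : ℕ, t < k → ∫ z, f z * z ^ t ∂(gaussianReal 0 1) = 0)
    (v : EuclideanSpace ℝ (Fin d)) (hv : ‖v‖ = 1) :
    ∃ β b : ℝ, (b = 1 ∨ b = -1) ∧
      1 / (2 * (k : ℝ)) ≤ ∫ x, f ⟪v, x⟫ * (b * sgn (⟪v, x⟫ - β)) ∂(stdGaussianPi d) := by
  obtain ⟨S, hSk, hS⟩ := hf_pc.exists_constOnGaps
  have h1 : ∀ z, |f z| = 1 := fun z ↦ by rcases hf_val z with h | h <;> simp [h]
  have hmean : ∫ z, f z ∂(gaussianReal 0 1) = 0 := by simpa using hmom 0 hk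
  have : NullSingletonClass (gaussianReal 0 1) := nullSingletonClass_gaussianReal one_ne_zero
  obtain ⟨β, hβ⟩ := hS.exists_one_le_card_mul_abs_integral_mul_sgn h1 hmean
  obtain ⟨b, hb, hbF⟩ := exists_sign_mul_eq_abs (∫ z, f z * sgn (z - β) ∂(gaussianReal 0 1))
  refine ⟨β, b, hb, ?_⟩
  rw [stdGaussianPi_eq_stdGaussian, integral_comp_inner_stdGaussian hv
    (g := fun z ↦ f z * (b * sgn (z - β)))
    (hS.measurable.mul (measurable_const.mul (measurable_sgn.comp (measurable_sub_const β))))]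
  simp_rw [mul_left_comm (f _), integral_const_mul, hbF]
  have hSk' : (S.card : ℝ) ≤ 2 * k := by
    have : (S.card : ℝ) ≤ k := by exact_mod_cast hSk
    linarith
  rw [div_le_iff₀' (by positivity)]
  exact hβ.trans (mul_le_mul_of_nonneg_right hSk' (abs_nonneg _))

/-- If `f : ℝ → {-1, 1}` is `(k+1)`-piecewise constant with vanishing Gaussian moments of
degree `< k`, then for any unit vector `v ∈ ℝ^d` there is a halfspace
`σ(x) = b · sign(⟪v, x⟫ - β)` with `E_{x ∼ N(0, I_d)}[f(⟪v, x⟫) σ(x)] ≥ 1/(2k)`. -/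
theorem stmt4 (k d : ℕ) (hk : 1 ≤ k) (hd : 1 ≤ d)
    (f : ℝ → ℝ) (hf_val : ∀ z, f z = 1 ∨ f z = -1)
    (hf_pc : PiecewiseConst (k + 1) f)
    (hmom : ∀ t : ℕ, t < k → ∫ z, f z * z ^ t ∂(gaussianReal 0 1) = 0)
    (v : EuclideanSpace ℝ (Fin d)) (hv : ‖v‖ = 1) :
    ∃ β b : ℝ, (b = 1 ∨ b = -1) ∧
      1 / (2 * (k : ℝ)) ≤ ∫ x, f ⟪v, x⟫ * (b * sgn (⟪v, x⟫ - β)) ∂(stdGaussianPi d) :=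
  stmt4_general k d hk f hf_val hf_pc hmom v hv
end

section
/- There exist absolute constants c > 0 and C > 0 such that for every positive integer k there exists a measurable function f : ℝ → [−1, 1] with E_{z∼N(0,1)}[f(z)·z^t] = 0 for every integer 0 ≤ t ≤ k, and E_{z∼N(0,1)}[f(z)·ReLU(z)] ≥ c·k^{−C}. -/
/-!
Take `f = 𝟙_[-1,1] · e^{(z²-1)/2} sin (N arccos z)`. The exponential factor cancels the Gaussian
density up to the constant `e^{-1/2}`, so
`E[f g] = e^{-1/2} / √(2π) · ∫_{-1}^1 sin (N arccos z) g z dz`, and the substitution `z = cos θ`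
turns this into `∫_0^π sin (N θ) g (cos θ) sin θ dθ`.
For `g = z^t` the function `cos^t θ sin θ` is a sine polynomial of degree `t + 1`, hence orthogonal
to `sin (N θ)` once `N > t + 1`. For `g = ReLU` and `N = 4m + 3` the integral is
`1 / (N² - 4)`, so `N = 4k + 3` gives the bound with `C = 2`.
-/

open MeasureTheory ProbabilityTheory Real Set

lemma integral_cos_const_mul {c : ℝ} (hc : c ≠ 0) (L : ℝ) :
    ∫ θ in (0 : ℝ)..L, cos (c * θ) = sin (c * L) / c := by
  rw [intervalIntegral.integral_comp_mul_left cos hc]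
  simp [integral_cos, div_eq_inv_mul]

lemma integral_sin_mul_sin {a b : ℝ} (h₁ : a - b ≠ 0) (h₂ : a + b ≠ 0) (L : ℝ) :
    ∫ θ in (0 : ℝ)..L, sin (a * θ) * sin (b * θ) =
      (sin ((a - b) * L) / (a - b) - sin ((a + b) * L) / (a + b)) / 2 := by
  have h : ∀ θ, sin (a * θ) * sin (b * θ) = (cos ((a - b) * θ) - cos ((a + b) * θ)) / 2 :=
    fun θ => by rw [sub_mul, add_mul, ← two_mul_sin_mul_sin]; ring
  simp_rw [h]
  rw [intervalIntegral.integral_div, intervalIntegral.integral_sub, integral_cos_const_mul h₁,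
    integral_cos_const_mul h₂] <;>
    exact Continuous.intervalIntegrable (by fun_prop) _ _

noncomputable def sinCosMoment (a : ℝ) (t : ℕ) : ℝ :=
  ∫ θ in (0 : ℝ)..π, sin (a * θ) * (cos θ ^ t * sin θ)

lemma sinCosMoment_succ (a : ℝ) (t : ℕ) :
    sinCosMoment a (t + 1) = (sinCosMoment (a + 1) t + sinCosMoment (a - 1) t) / 2 := by
  have h : ∀ θ, sin (a * θ) * (cos θ ^ (t + 1) * sin θ) =
      (sin ((a + 1) * θ) * (cos θ ^ t * sin θ) + sin ((a - 1) * θ) * (cos θ ^ t * sin θ)) / 2 :=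
    fun θ => by
      rw [add_mul, sub_mul, one_mul]
      linear_combination (cos θ ^ t * sin θ) / 2 * two_mul_sin_mul_cos (a * θ) θ
  simp only [sinCosMoment]
  simp_rw [h]
  rw [intervalIntegral.integral_div, intervalIntegral.integral_add] <;>
    exact Continuous.intervalIntegrable (by fun_prop) _ _

lemma sinCosMoment_zero_of_two_le {n : ℕ} (hn : 2 ≤ n) : sinCosMoment n 0 = 0 := by
  have hn' : (2 : ℝ) ≤ n := by exact_mod_cast hn
  have h : sinCosMoment n 0 = ∫ θ in (0 : ℝ)..π, sin (n * θ) * sin (1 * θ) := by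
    simp [sinCosMoment]
  have hsub := sin_int_mul_pi ((n : ℤ) - 1)
  have hadd := sin_int_mul_pi ((n : ℤ) + 1)
  push_cast at hsub hadd
  rw [h, integral_sin_mul_sin (by linarith) (by linarith), hsub, hadd]
  simp

lemma sinCosMoment_eq_zero {n t : ℕ} (h : t + 1 < n) : sinCosMoment n t = 0 := by
  induction t generalizing n with
  | zero => exact sinCosMoment_zero_of_two_le h
  | succ t ih =>
    have hpred : (n : ℝ) - 1 = ((n - 1 : ℕ) : ℝ) := by rw [Nat.cast_sub (by omega)]; simp
    rw [sinCosMoment_succ, hpred, ← Nat.cast_succ, ih (by omega), ih (by omega)]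
    simp

lemma integral_sin_mul_arccos_mul (a : ℝ) {g : ℝ → ℝ} (hg : Continuous g) {b : ℝ}
    (hb₀ : 0 ≤ b) (hb : b ≤ π) :
    ∫ z in cos b..1, sin (a * arccos z) * g z =
      ∫ θ in (0 : ℝ)..b, sin (a * θ) * (g (cos θ) * sin θ) := by
  rw [← cos_zero,
    ← intervalIntegral.integral_comp_mul_deriv (fun θ _ => hasDerivAt_cos θ) (by fun_prop)
    (by fun_prop : Continuous fun z => sin (a * arccos z) * g z), intervalIntegral.integral_symm,
    ← intervalIntegral.integral_neg]
  refine intervalIntegral.integral_congr fun θ hθ => ?_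
  rw [uIcc_of_le hb₀] at hθ
  rw [Function.comp_apply, arccos_cos hθ.1 (hθ.2.trans hb)]
  ring

lemma integral_indicator_Icc_exp_mul_gaussianReal (φ : ℝ → ℝ) {a b : ℝ} (hab : a ≤ b) :
    ∫ z, (Icc a b).indicator (fun z => exp (z ^ 2 / 2) * φ z) z ∂(gaussianReal 0 1) =
      (√(2 * π))⁻¹ * ∫ z in a..b, φ z := by
  have h : ∀ z, gaussianPDFReal 0 1 z • (Icc a b).indicator (fun z => exp (z ^ 2 / 2) * φ z) z =
      (Icc a b).indicator (fun z => (√(2 * π))⁻¹ * φ z) z := fun x => by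
    rw [smul_eq_mul, ← indicator_mul_right]
    congr 1
    funext z
    rw [gaussianPDFReal_def]
    simp only [NNReal.coe_one, mul_one, sub_zero]
    have : exp (z ^ 2 / 2) * exp (-z ^ 2 / 2) = 1 := by rw [← exp_add]; simp [neg_div]
    linear_combination (√(2 * π))⁻¹ * φ z * this
  rw [integral_gaussianReal_eq_integral_smul one_ne_zero]
  simp_rw [h]
  rw [integral_indicator measurableSet_Icc, integral_Icc_eq_integral_Ioc,
    ← intervalIntegral.integral_of_le hab,
    intervalIntegral.integral_const_mul]

noncomputable def tiltedChebyshev (n : ℕ) : ℝ → ℝ :=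
  (Icc (-1) 1).indicator fun z => exp ((z ^ 2 - 1) / 2) * sin (n * arccos z)

lemma measurable_tiltedChebyshev (n : ℕ) : Measurable (tiltedChebyshev n) :=
  (Continuous.measurable (by fun_prop)).indicator measurableSet_Icc

lemma tiltedChebyshev_mem_Icc (n : ℕ) (z : ℝ) : tiltedChebyshev n z ∈ Icc (-1 : ℝ) 1 := by
  refine mem_Icc.mpr (abs_le.mp ?_)
  by_cases hz : z ∈ Icc (-1 : ℝ) 1
  · have hexp : exp ((z ^ 2 - 1) / 2) ≤ 1 := by
      rw [exp_le_one_iff]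
      nlinarith [hz.1, hz.2]
    rw [tiltedChebyshev, indicator_of_mem hz, abs_mul, abs_of_pos (exp_pos _)]
    exact mul_le_one₀ hexp (abs_nonneg _) (abs_sin_le_one _)
  · simp [tiltedChebyshev, indicator_of_notMem hz]

lemma integral_tiltedChebyshev_mul (n : ℕ) (g : ℝ → ℝ) :
    ∫ z, tiltedChebyshev n z * g z ∂(gaussianReal 0 1) =
      exp (-1 / 2) / √(2 * π) * ∫ z in (-1 : ℝ)..1, sin (n * arccos z) * g z := by
  have h : ∀ z, tiltedChebyshev n z * g z = (Icc (-1) 1).indicator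
      (fun z => exp (z ^ 2 / 2) * (exp (-1 / 2) * (sin (n * arccos z) * g z))) z := fun x => by
    rw [tiltedChebyshev, ← indicator_mul_left]
    congr 1
    funext z
    rw [show (z ^ 2 - 1) / 2 = z ^ 2 / 2 + -1 / 2 by ring, exp_add]
    ring
  simp_rw [h]
  rw [integral_indicator_Icc_exp_mul_gaussianReal _ (by norm_num),
    intervalIntegral.integral_const_mul]
  ring

lemma integral_tiltedChebyshev_mul_pow {n t : ℕ} (h : t + 1 < n) :
    ∫ z, tiltedChebyshev n z * z ^ t ∂(gaussianReal 0 1) = 0 := by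
  have hmoment : ∫ z in (-1 : ℝ)..1, sin (n * arccos z) * z ^ t = sinCosMoment n t := by
    rw [← cos_pi]
    exact integral_sin_mul_arccos_mul _ (continuous_pow t) pi_pos.le le_rfl
  rw [integral_tiltedChebyshev_mul, hmoment, sinCosMoment_eq_zero h, mul_zero]

lemma integral_tiltedChebyshev_mul_relu (m : ℕ) :
    ∫ z, tiltedChebyshev (4 * m + 3) z * max z 0 ∂(gaussianReal 0 1) =
      exp (-1 / 2) / √(2 * π) / ((4 * m + 1) * (4 * m + 5)) := by
  set N : ℝ := ((4 * m + 3 : ℕ) : ℝ) with hN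
  have hcont : Continuous fun z => sin (N * arccos z) * max z 0 := by fun_prop
  have hsplit : ∫ z in (-1 : ℝ)..1, sin (N * arccos z) * max z 0 =
      ∫ z in (0 : ℝ)..1, sin (N * arccos z) * z := by
    rw [← intervalIntegral.integral_add_adjacent_intervals (b := 0)
      (hcont.intervalIntegrable _ _) (hcont.intervalIntegrable _ _)]
    have hneg : ∫ z in (-1 : ℝ)..0, sin (N * arccos z) * max z 0 = 0 := by
      rw [intervalIntegral.integral_congr (g := fun _ => 0) fun z hz => by
        rw [uIcc_of_le (by norm_num)] at hz
        simp [max_eq_right hz.2]]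
      simp
    rw [hneg, zero_add]
    refine intervalIntegral.integral_congr fun z hz => ?_
    rw [uIcc_of_le zero_le_one] at hz
    simp [max_eq_left hz.1]
  have hsubst : ∫ z in (0 : ℝ)..1, sin (N * arccos z) * z =
      (∫ θ in (0 : ℝ)..π / 2, sin (N * θ) * sin (2 * θ)) / 2 := by
    have h := integral_sin_mul_arccos_mul N (g := fun z => z) continuous_id (b := π / 2)
      (by positivity) (by linarith [pi_pos])
    rw [cos_pi_div_two] at h
    rw [h, ← intervalIntegral.integral_div]
    refine intervalIntegral.integral_congr fun θ _ => ?_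
    rw [sin_two_mul]
    ring
  have hlow : sin ((N - 2) * (π / 2)) = 1 := by
    rw [show (N - 2) * (π / 2) = π / 2 + m * (2 * π) by rw [hN]; push_cast; ring,
      sin_add_nat_mul_two_pi, sin_pi_div_two]
  have hhigh : sin ((N + 2) * (π / 2)) = 1 := by
    rw [show (N + 2) * (π / 2) = π / 2 + ((m + 1 : ℕ) : ℝ) * (2 * π) by rw [hN]; push_cast; ring,
      sin_add_nat_mul_two_pi, sin_pi_div_two]
  have hN2 : N - 2 = 4 * m + 1 := by rw [hN]; push_cast; ring
  have hN2' : N + 2 = 4 * m + 5 := by rw [hN]; push_cast; ring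
  rw [integral_tiltedChebyshev_mul, hsplit, hsubst,
    integral_sin_mul_sin (by rw [hN2]; positivity) (by rw [hN2']; positivity), hlow, hhigh,
    hN2, hN2']
  field_simp
  ring

/-- There are absolute constants `c, C > 0` such that for every `k ≥ 1` there exists a
measurable `f : ℝ → [-1, 1]` whose Gaussian moments of degree `≤ k` all vanish and with
`E_{z ∼ N(0,1)}[f(z) · ReLU(z)] ≥ c k^(-C)`. -/
theorem stmt8 :
    ∃ c C : ℝ, 0 < c ∧ 0 < C ∧ ∀ k : ℕ, 0 < k →
      ∃ f : ℝ → ℝ, Measurable f ∧ (∀ z, f z ∈ Set.Icc (-1 : ℝ) 1) ∧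
        (∀ t : ℕ, t ≤ k → ∫ z, f z * z ^ t ∂(gaussianReal 0 1) = 0) ∧
        c * (k : ℝ) ^ (-C) ≤ ∫ z, f z * max z 0 ∂(gaussianReal 0 1) := by
  refine ⟨exp (-1 / 2) / √(2 * π) / 45, 2, by positivity, two_pos, fun k hk => ?_⟩
  refine ⟨tiltedChebyshev (4 * k + 3), measurable_tiltedChebyshev _, tiltedChebyshev_mem_Icc _,
    fun t ht => integral_tiltedChebyshev_mul_pow (by omega), ?_⟩
  have hk₁ : (1 : ℝ) ≤ k := by exact_mod_cast hk
  rw [integral_tiltedChebyshev_mul_relu, rpow_neg (by positivity), rpow_two, ← div_eq_mul_inv,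
    div_div]
  exact div_le_div_of_nonneg_left (by positivity) (by positivity) (by nlinarith)
end

section
/- For every ε > 0 and all real numbers a and b, ∫_{−ε}^{ε} (|z|/2 − a·z − b)² dz ≥ ε³/24. -/
/-!
Folding `[-ε, 0]` onto `[0, ε]` pairs `z` with `-z`. The even part `|z|/2 - b` of the integrand
is orthogonal to its odd part `a z`, so the folded integrand is
`2 (z/2 - b)² + 2 a² z² ≥ (z - 2b)² / 2`, and the integral of `(z - c)²` over an interval of
length `ε` is at least `ε³/12`, attained at its midpoint `c = ε/2`.
-/

open MeasureTheory intervalIntegral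

theorem intervalIntegral.integral_neg_self_eq_integral_add_comp_neg {f : ℝ → ℝ} (hf : Continuous f)
    (r : ℝ) : ∫ z in (-r)..r, f z = ∫ z in 0..r, (f z + f (-z)) := by
  have hneg : Continuous fun z => f (-z) := hf.comp continuous_neg
  rw [← integral_add_adjacent_intervals (hf.intervalIntegrable (-r) 0) (hf.intervalIntegrable 0 r),
    integral_add (hf.intervalIntegrable 0 r) (hneg.intervalIntegrable 0 r),
    integral_comp_neg, neg_zero, add_comm]

theorem cube_div_twelve_le_integral_sq_sub {ε : ℝ} (hε : 0 ≤ ε) (c : ℝ) :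
    ε ^ 3 / 12 ≤ ∫ z in 0..ε, (z - c) ^ 2 := by
  rw [integral_comp_sub_right (· ^ 2), integral_pow]
  nlinarith [mul_nonneg hε (sq_nonneg (ε - 2 * c))]

/-- For every `ε > 0` and all reals `a, b`,
`∫_{-ε}^{ε} (|z|/2 - a z - b)² dz ≥ ε³/24`. -/
theorem stmt12 (ε : ℝ) (hε : 0 < ε) (a b : ℝ) :
    ε ^ 3 / 24 ≤ ∫ z in (-ε)..ε, (|z| / 2 - a * z - b) ^ 2 := by
  have hfold : ∀ z ∈ Set.Icc 0 ε, (z - 2 * b) ^ 2 / 2 ≤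
      (|z| / 2 - a * z - b) ^ 2 + (|-z| / 2 - a * -z - b) ^ 2 := by
    rintro z ⟨hz, -⟩
    rw [abs_neg, abs_of_nonneg hz]
    nlinarith [sq_nonneg (a * z)]
  calc ε ^ 3 / 24 ≤ (∫ z in 0..ε, (z - 2 * b) ^ 2) / 2 := by
        linarith [cube_div_twelve_le_integral_sq_sub hε.le (2 * b)]
    _ = ∫ z in 0..ε, (z - 2 * b) ^ 2 / 2 := (intervalIntegral.integral_div _ _).symm
    _ ≤ ∫ z in 0..ε, ((|z| / 2 - a * z - b) ^ 2 + (|-z| / 2 - a * -z - b) ^ 2) :=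
        integral_mono_on hε.le (Continuous.intervalIntegrable (by fun_prop) _ _)
          (Continuous.intervalIntegrable (by fun_prop) _ _) hfold
    _ = ∫ z in (-ε)..ε, (|z| / 2 - a * z - b) ^ 2 :=
        (integral_neg_self_eq_integral_add_comp_neg (by fun_prop) ε).symm
end

section
/- For every integer k ≥ 1 there exists a polynomial p of degree at most k such that ∫_{−1}^{1} (ReLU(z) − p(z))·z^t dz = 0 for every integer 0 ≤ t ≤ k (equivalently, ReLU − p is orthogonal in L²([−1,1], Lebesgue) to every polynomial of degree at most k), and |p(z)| ≤ 2k² for all z ∈ [−1, 1]. -/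
/-!
The polynomial is the `L²[-1, 1]` projection of ReLU onto polynomials of degree `≤ k`, written in
the orthogonal Legendre basis `R n = Dⁿ (x² - 1)ⁿ`: with coefficients
`⟨ReLU, R n⟩ / ‖R n‖²` the residual is orthogonal to every `R m`, `m ≤ k`, hence to every
polynomial of degree `≤ k`.

For the bound, Cauchy–Schwarz and `‖ReLU‖² = 1/3` give `|⟨ReLU, R n⟩| ≤ ‖R n‖ / √3`. Integrating
by parts `n` times, `‖R n‖² = (2n)! ∫ (1 - x²)ⁿ ≥ 2 (2n)! / (n + 1)`, and the Legendre equation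
shows `|R n| ≤ 2ⁿ n!` on `[-1, 1]`. As `4ⁿ ≤ (2n + 1) C(2n, n)`, the `n`-th term of the
expansion is at most `n + 1/2` in absolute value, so `|p| ≤ (k + 1)² / 2 ≤ 2k²`.
-/

open MeasureTheory intervalIntegral Polynomial Set

open scoped Nat

namespace Polynomial

variable {R : Type*} [CommRing R]

theorem eval_iterate_derivative_X_sub_C_pow_mul (n : ℕ) (t : R) (q : R[X]) :
    (derivative^[n] ((X - C t) ^ n * q)).eval t = n ! * q.eval t := by
  rw [iterate_derivative_mul, eval_finsetSum,
    Finset.sum_eq_single_of_mem _ (Finset.mem_range.mpr n.succ_pos)]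
  · simp [iterate_derivative_X_sub_pow_self]
  · intro k hk hk0
    rw [iterate_derivative_X_sub_pow, Nat.sub_sub_self (Finset.mem_range_succ_iff.mp hk)]
    simp [zero_pow hk0]

theorem eval_iterate_derivative_eq_zero_of_pow_dvd {p : R[X]} {t : R} {n j : ℕ}
    (h : (X - C t) ^ n ∣ p) (hj : j < n) : (derivative^[j] p).eval t = 0 :=
  dvd_iff_isRoot.mp <| (dvd_pow_self _ (Nat.sub_ne_zero_of_lt hj)).trans
    (pow_sub_dvd_iterate_derivative_of_pow_dvd j h)

end Polynomial

theorem integral_eval_derivative_mul (u v : ℝ[X]) {a b : ℝ} (ha : u.eval a = 0)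
    (hb : u.eval b = 0) :
    ∫ x in a..b, (derivative u).eval x * v.eval x =
      -∫ x in a..b, u.eval x * (derivative v).eval x := by
  have hparts := integral_deriv_mul_eq_sub (fun x _ ↦ u.hasDerivAt x) (fun x _ ↦ v.hasDerivAt x)
    ((derivative u).continuous.intervalIntegrable a b)
    ((derivative v).continuous.intervalIntegrable a b)
  rw [intervalIntegral.integral_add (Continuous.intervalIntegrable (by fun_prop) _ _)
    (Continuous.intervalIntegrable (by fun_prop) _ _), ha, hb] at hparts
  linarith

theorem integral_eval_iterate_derivative_mul (q v : ℝ[X]) {a b : ℝ} {m : ℕ}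
    (hq : ∀ j < m, (derivative^[j] q).eval a = 0 ∧ (derivative^[j] q).eval b = 0) :
    ∫ x in a..b, (derivative^[m] q).eval x * v.eval x =
      (-1) ^ m * ∫ x in a..b, q.eval x * (derivative^[m] v).eval x := by
  induction m generalizing v with
  | zero => simp
  | succ m ih =>
    obtain ⟨ha, hb⟩ := hq m m.lt_succ_self
    rw [Function.iterate_succ_apply', integral_eval_derivative_mul _ _ ha hb,
      ih _ (fun j hj ↦ hq j (hj.trans m.lt_succ_self)), Function.iterate_succ_apply]
    ring

theorem sq_intervalIntegral_mul_le {f g : ℝ → ℝ} (hf : Continuous f) (hg : Continuous g)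
    {a b : ℝ} (hab : a ≤ b) :
    (∫ x in a..b, f x * g x) ^ 2 ≤ (∫ x in a..b, f x ^ 2) * ∫ x in a..b, g x ^ 2 := by
  have hquad (t : ℝ) : 0 ≤ (∫ x in a..b, g x ^ 2) * (t * t) + 2 * (∫ x in a..b, f x * g x) * t +
      ∫ x in a..b, f x ^ 2 := by
    have hexpand : ∫ x in a..b, (f x + t * g x) ^ 2 = (∫ x in a..b, f x ^ 2) +
        (2 * t) * (∫ x in a..b, f x * g x) + t ^ 2 * ∫ x in a..b, g x ^ 2 := by
      have hpt (x : ℝ) : (f x + t * g x) ^ 2 =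
          f x ^ 2 + (2 * t) * (f x * g x) + t ^ 2 * g x ^ 2 := by ring
      simp_rw [hpt]
      rw [intervalIntegral.integral_add, intervalIntegral.integral_add,
        intervalIntegral.integral_const_mul, intervalIntegral.integral_const_mul] <;>
      exact Continuous.intervalIntegrable (by fun_prop) _ _
    have : 0 ≤ ∫ x in a..b, (f x + t * g x) ^ 2 :=
      intervalIntegral.integral_nonneg hab fun x _ ↦ sq_nonneg _
    linarith
  have := discrim_le_zero hquad
  rw [discrim] at this
  linarith

theorem integral_mul_eval_eq_zero_of_degree_lt {g : ℝ → ℝ} (hg : Continuous g) {a b : ℝ}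
    {p : ℕ → ℝ[X]} (hp : ∀ m, (p m).degree = m) {d : ℕ}
    (h : ∀ m < d, ∫ x in a..b, g x * (p m).eval x = 0) {v : ℝ[X]} (hv : v.degree < d) :
    ∫ x in a..b, g x * v.eval x = 0 := by
  induction d generalizing v with
  | zero =>
    have : v = 0 := ext fun m ↦ by simpa using (degree_lt_iff_coeff_zero v 0).mp hv m m.zero_le
    simp [this]
  | succ d ih =>
    set c := v.coeff d / (p d).coeff d
    have hpd : (p d).coeff d ≠ 0 := coeff_ne_zero_of_eq_degree (hp d)
    have hw : (v - C c * p d).degree < d := by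
      rw [degree_lt_iff_coeff_zero]
      intro m hm
      rcases hm.eq_or_lt with rfl | hlt
      · simp [c, div_mul_cancel₀ _ hpd]
      · have hvm : v.coeff m = 0 :=
          coeff_eq_zero_of_degree_lt (hv.trans_le (by exact_mod_cast hlt))
        have hpm : (p d).coeff m = 0 :=
          coeff_eq_zero_of_degree_lt (by rw [hp d]; exact_mod_cast hlt)
        simp [hvm, hpm]
    have hsplit : ∫ x in a..b, g x * v.eval x =
        (∫ x in a..b, g x * (v - C c * p d).eval x) + c * ∫ x in a..b, g x * (p d).eval x := by
      rw [← intervalIntegral.integral_const_mul, ← intervalIntegral.integral_add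
        (Continuous.intervalIntegrable (by fun_prop) _ _)
        (Continuous.intervalIntegrable (by fun_prop) _ _)]
      congr 1 with x
      simp only [eval_sub, eval_mul, eval_C]
      ring
    rw [hsplit, ih (fun m hm ↦ h m (hm.trans d.lt_succ_self)) hw, h d d.lt_succ_self, mul_zero,
      add_zero]

theorem sq_eval_le_max_of_legendre_ode {f : ℝ[X]} {N : ℝ} (hN : 0 < N)
    (hode : (1 - X ^ 2) * derivative (derivative f) = 2 * X * derivative f - C N * f)
    {x : ℝ} (hx : x ∈ Icc (-1 : ℝ) 1) :
    f.eval x ^ 2 ≤ max (f.eval (-1) ^ 2) (f.eval 1 ^ 2) := by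
  -- `g` decreases on `[-1, 0]`, increases on `[0, 1]`, dominates `N f²` and equals it at `±1`.
  set g : ℝ[X] := C N * f ^ 2 + (1 - X ^ 2) * derivative f ^ 2
  have hg : derivative g = 2 * X * derivative f ^ 2 := by
    simp only [g, derivative_add, derivative_mul, derivative_C, derivative_sub, derivative_one,
      derivative_sq, derivative_X, map_ofNat]
    linear_combination 2 * derivative f * hode
  have hderiv (y : ℝ) : deriv (fun y ↦ g.eval y) y = 2 * y * (derivative f).eval y ^ 2 := by
    simp [Polynomial.deriv, hg]
  have hmono : MonotoneOn (fun y ↦ g.eval y) (Icc 0 1) :=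
    monotoneOn_of_deriv_nonneg (convex_Icc 0 1) g.continuous.continuousOn
      g.differentiable.differentiableOn fun y hy ↦ by
        rw [interior_Icc] at hy
        rw [hderiv]
        have := hy.1.le
        positivity
  have hanti : AntitoneOn (fun y ↦ g.eval y) (Icc (-1) 0) :=
    antitoneOn_of_deriv_nonpos (convex_Icc (-1) 0) g.continuous.continuousOn
      g.differentiable.differentiableOn fun y hy ↦ by
        rw [interior_Icc] at hy
        rw [hderiv]
        nlinarith [hy.2, sq_nonneg ((derivative f).eval y)]
  have hgx : N * f.eval x ^ 2 ≤ g.eval x := by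
    have : 0 ≤ (1 - x ^ 2) * (derivative f).eval x ^ 2 := by
      have : x ^ 2 ≤ 1 := by nlinarith [hx.1, hx.2]
      have : 0 ≤ 1 - x ^ 2 := by linarith
      positivity
    simp only [g, eval_add, eval_mul, eval_C, eval_pow, eval_sub, eval_one, eval_X]
    linarith
  have hg_le : g.eval x ≤ max (g.eval (-1)) (g.eval 1) := by
    rcases le_total 0 x with h0 | h0
    · exact (hmono ⟨h0, hx.2⟩ ⟨zero_le_one, le_rfl⟩ hx.2).trans (le_max_right _ _)
    · exact (hanti ⟨le_rfl, by norm_num⟩ ⟨hx.1, h0⟩ hx.1).trans (le_max_left _ _)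
  have hg_end (y : ℝ) (hy : y ^ 2 = 1) : g.eval y = N * f.eval y ^ 2 := by
    simp [g, hy]
  rw [hg_end (-1) (by norm_num), hg_end 1 (by norm_num), ← mul_max_of_nonneg _ _ hN.le] at hg_le
  exact le_of_mul_le_mul_left (hgx.trans hg_le) hN

section XSqSubOnePow

variable {R : Type*} [CommRing R]

theorem X_sq_sub_one_pow (n : ℕ) :
    (X ^ 2 - 1 : R[X]) ^ n = (X - C 1) ^ n * (X - C (-1)) ^ n := by
  rw [← mul_pow]; congr 1; simp only [map_one, map_neg]; ring

theorem eval_iterate_derivative_X_sq_sub_one_pow {n j : ℕ} (hj : j < n) :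
    (derivative^[j] ((X ^ 2 - 1 : R[X]) ^ n)).eval 1 = 0 ∧
      (derivative^[j] ((X ^ 2 - 1 : R[X]) ^ n)).eval (-1) = 0 := by
  rw [X_sq_sub_one_pow]
  exact ⟨eval_iterate_derivative_eq_zero_of_pow_dvd (by simp) hj,
    eval_iterate_derivative_eq_zero_of_pow_dvd (dvd_mul_left _ _) hj⟩

theorem monic_X_sq_sub_one_pow (n : ℕ) : ((X ^ 2 - 1 : R[X]) ^ n).Monic := by
  simpa using ((monic_X_pow_sub_C (1 : R) two_ne_zero).pow n)

theorem natDegree_X_sq_sub_one_pow [Nontrivial R] (n : ℕ) :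
    ((X ^ 2 - 1 : R[X]) ^ n).natDegree = 2 * n := by
  rw [← C_1, (monic_X_pow_sub_C (1 : R) two_ne_zero).natDegree_pow, natDegree_X_pow_sub_C,
    mul_comm]

theorem X_sq_sub_one_mul_derivative_pow (n : ℕ) :
    (X ^ 2 - 1 : R[X]) * derivative ((X ^ 2 - 1) ^ n) = 2 * (n : R[X]) * X * (X ^ 2 - 1) ^ n := by
  cases n with
  | zero => simp
  | succ n =>
    rw [derivative_pow, derivative_sub, derivative_X_pow, derivative_one, Nat.add_sub_cancel]
    simp only [C_eq_natCast, Nat.cast_ofNat, map_ofNat]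
    push_cast
    ring

theorem X_sq_sub_one_mul_iterate_derivative_pow (n m : ℕ) :
    (X ^ 2 - 1 : R[X]) * derivative^[m + 2] ((X ^ 2 - 1) ^ n) =
      2 * ((n : R[X]) - (m : R[X]) - 1) * X * derivative^[m + 1] ((X ^ 2 - 1 : R[X]) ^ n) +
        ((m : R[X]) + 1) * (2 * (n : R[X]) - (m : R[X])) *
          derivative^[m] ((X ^ 2 - 1 : R[X]) ^ n) := by
  induction m with
  | zero =>
    have h := congrArg derivative (X_sq_sub_one_mul_derivative_pow (R := R) n)
    simp only [derivative_mul, derivative_sub, derivative_X_pow, derivative_one,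
      derivative_natCast, derivative_ofNat, derivative_X, Nat.cast_ofNat, map_ofNat] at h
    simp only [Function.iterate_succ_apply', Function.iterate_zero_apply]
    linear_combination h
  | succ m ih =>
    have h := congrArg derivative ih
    simp only [derivative_mul, derivative_add, derivative_sub, derivative_X_pow, derivative_one,
      derivative_natCast, derivative_ofNat, derivative_X, Nat.cast_ofNat, map_ofNat] at h
    simp only [Function.iterate_succ_apply'] at h ⊢
    push_cast
    linear_combination h

end XSqSubOnePow

-- Rodrigues' formula: `rodrigues n = 2 ^ n * n ! * Pₙ` for the Legendre polynomial `Pₙ`.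
noncomputable def rodrigues (n : ℕ) : ℝ[X] := derivative^[n] ((X ^ 2 - 1) ^ n)

theorem eval_one_rodrigues (n : ℕ) : (rodrigues n).eval 1 = n ! * 2 ^ n := by
  rw [rodrigues, X_sq_sub_one_pow, eval_iterate_derivative_X_sub_C_pow_mul]
  norm_num

theorem eval_neg_one_rodrigues (n : ℕ) : (rodrigues n).eval (-1) = n ! * (-2) ^ n := by
  rw [rodrigues, X_sq_sub_one_pow, mul_comm, eval_iterate_derivative_X_sub_C_pow_mul]
  norm_num

theorem coeff_rodrigues (n : ℕ) : (rodrigues n).coeff n = (2 * n).descFactorial n := by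
  rw [rodrigues, coeff_iterate_derivative, ← two_mul, ← natDegree_X_sq_sub_one_pow (R := ℝ),
    (monic_X_sq_sub_one_pow n).coeff_natDegree, nsmul_one]

theorem degree_rodrigues (n : ℕ) : (rodrigues n).degree = n := by
  refine degree_eq_of_le_of_coeff_ne_zero ?_ ?_
  · refine (degree_le_natDegree).trans ?_
    exact_mod_cast (natDegree_iterate_derivative _ n).trans (by
      rw [natDegree_X_sq_sub_one_pow]; omega)
  · rw [coeff_rodrigues]
    exact_mod_cast (Nat.descFactorial_pos.mpr (by omega)).ne'

theorem iterate_derivative_rodrigues (n : ℕ) :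
    derivative^[n] (rodrigues n) = C ((2 * n)! : ℝ) := by
  have hdeg : (derivative^[n + n] ((X ^ 2 - 1 : ℝ[X]) ^ n)).natDegree ≤ 0 :=
    (natDegree_iterate_derivative _ _).trans (by rw [natDegree_X_sq_sub_one_pow]; omega)
  rw [rodrigues, ← Function.iterate_add_apply, eq_C_of_natDegree_le_zero hdeg,
    coeff_iterate_derivative, zero_add, ← two_mul, ← natDegree_X_sq_sub_one_pow (R := ℝ),
    (monic_X_sq_sub_one_pow n).coeff_natDegree, natDegree_X_sq_sub_one_pow,
    Nat.descFactorial_self, nsmul_one]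

theorem integral_rodrigues_mul (n : ℕ) (v : ℝ[X]) :
    ∫ x in (-1 : ℝ)..1, (rodrigues n).eval x * v.eval x =
      ∫ x in (-1 : ℝ)..1, (1 - x ^ 2) ^ n * (derivative^[n] v).eval x := by
  rw [rodrigues, integral_eval_iterate_derivative_mul _ _ fun j hj ↦
    (eval_iterate_derivative_X_sq_sub_one_pow hj).symm, ← intervalIntegral.integral_const_mul]
  congr 1 with x
  simp only [eval_pow, eval_sub, eval_X, eval_one]
  rw [← mul_assoc, ← mul_pow]
  ring_nf

theorem integral_rodrigues_mul_eq_zero {n : ℕ} {v : ℝ[X]} (hv : v.degree < n) :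
    ∫ x in (-1 : ℝ)..1, (rodrigues n).eval x * v.eval x = 0 := by
  simp [integral_rodrigues_mul, iterate_derivative_eq_zero_of_degree_lt hv]

theorem integral_rodrigues_sq (n : ℕ) :
    ∫ x in (-1 : ℝ)..1, (rodrigues n).eval x ^ 2 =
      (2 * n)! * ∫ x in (-1 : ℝ)..1, (1 - x ^ 2) ^ n := by
  calc ∫ x in (-1 : ℝ)..1, (rodrigues n).eval x ^ 2
      = ∫ x in (-1 : ℝ)..1, (rodrigues n).eval x * (rodrigues n).eval x := by simp only [sq]
    _ = ∫ x in (-1 : ℝ)..1, (1 - x ^ 2) ^ n * (2 * n)! := by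
      simp only [integral_rodrigues_mul, iterate_derivative_rodrigues, eval_C]
    _ = _ := by rw [intervalIntegral.integral_mul_const, mul_comm]

theorem rodrigues_ode (n : ℕ) :
    (1 - X ^ 2) * derivative (derivative (rodrigues n)) =
      2 * X * derivative (rodrigues n) - C ((n : ℝ) * (n + 1)) * rodrigues n := by
  have h := X_sq_sub_one_mul_iterate_derivative_pow (R := ℝ) n n
  simp only [Function.iterate_succ_apply'] at h
  simp only [rodrigues, map_mul, map_add, map_natCast, map_one]
  linear_combination -h

theorem sq_eval_rodrigues_le (n : ℕ) {x : ℝ} (hx : x ∈ Icc (-1 : ℝ) 1) :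
    (rodrigues n).eval x ^ 2 ≤ (n ! * 2 ^ n) ^ 2 := by
  rcases n.eq_zero_or_pos with rfl | hn
  · simp [rodrigues]
  have h := sq_eval_le_max_of_legendre_ode (by positivity) (rodrigues_ode n) hx
  have hsign : ((-2 : ℝ) ^ n) ^ 2 = (2 ^ n) ^ 2 := by
    rw [← sq_abs, abs_pow, abs_neg, abs_two]
  rwa [eval_one_rodrigues, eval_neg_one_rodrigues, mul_pow _ ((-2 : ℝ) ^ n), hsign, ← mul_pow,
    max_self] at h

theorem two_div_succ_le_integral_one_sub_sq_pow (n : ℕ) :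
    (2 : ℝ) / (n + 1) ≤ ∫ x in (-1 : ℝ)..1, (1 - x ^ 2) ^ n := by
  have heven : ∫ x in (-1 : ℝ)..0, (1 - x ^ 2) ^ n = ∫ x in (0 : ℝ)..1, (1 - x ^ 2) ^ n := by
    have h := intervalIntegral.integral_comp_neg (a := 0) (b := 1) fun x : ℝ ↦ (1 - x ^ 2) ^ n
    simp only [neg_sq, neg_zero] at h
    exact h.symm
  have hhalf : (1 : ℝ) / (n + 1) ≤ ∫ x in (0 : ℝ)..1, (1 - x ^ 2) ^ n :=
    calc (1 : ℝ) / (n + 1) = ∫ x in (0 : ℝ)..1, (1 - x) ^ n := by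
          simp [intervalIntegral.integral_comp_sub_left (fun x : ℝ ↦ x ^ n)]
      _ ≤ _ := intervalIntegral.integral_mono_on zero_le_one
          (Continuous.intervalIntegrable (by fun_prop) _ _)
          (Continuous.intervalIntegrable (by fun_prop) _ _) fun x hx ↦
            pow_le_pow_left₀ (by linarith [hx.2]) (by nlinarith [hx.1, hx.2]) n
  rw [← intervalIntegral.integral_add_adjacent_intervals (b := 0)
    (Continuous.intervalIntegrable (by fun_prop) _ _)
    (Continuous.intervalIntegrable (by fun_prop) _ _), heven]
  linarith [show (2 : ℝ) / (n + 1) = 1 / (n + 1) + 1 / (n + 1) by ring]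

theorem sq_factorial_mul_two_pow_le (n : ℕ) :
    ((n ! : ℝ) * 2 ^ n) ^ 2 ≤ (2 * n + 1) * (2 * n)! := by
  have hchoose : (2 * n).choose n * (n ! * n !) = (2 * n)! := by
    simpa [two_mul, mul_assoc] using Nat.choose_mul_factorial_mul_factorial (n.le_add_left n)
  have hnat : 4 ^ n * (n ! * n !) ≤ (2 * n + 1) * (2 * n)! :=
    calc 4 ^ n * (n ! * n !) ≤ (2 * n + 1) * (2 * n).choose n * (n ! * n !) :=
          Nat.mul_le_mul_right _ (Nat.four_pow_le_two_mul_add_one_mul_central_binom n)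
      _ = (2 * n + 1) * (2 * n)! := by rw [mul_assoc, hchoose]
  calc ((n ! : ℝ) * 2 ^ n) ^ 2 = ((4 ^ n * (n ! * n !) : ℕ) : ℝ) := by
        push_cast
        rw [show (4 : ℝ) = 2 ^ 2 by norm_num, ← pow_mul]
        ring
    _ ≤ _ := by exact_mod_cast hnat

theorem integral_rodrigues_sq_pos (n : ℕ) : 0 < ∫ x in (-1 : ℝ)..1, (rodrigues n).eval x ^ 2 := by
  rw [integral_rodrigues_sq]
  exact mul_pos (by positivity) ((by positivity : (0 : ℝ) < 2 / (n + 1)).trans_le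
    (two_div_succ_le_integral_one_sub_sq_pow n))

theorem integral_rodrigues_mul_rodrigues {m n : ℕ} (h : m ≠ n) :
    ∫ x in (-1 : ℝ)..1, (rodrigues n).eval x * (rodrigues m).eval x = 0 := by
  rcases h.lt_or_gt with h | h
  · exact integral_rodrigues_mul_eq_zero (by rw [degree_rodrigues]; exact_mod_cast h)
  · simp_rw [mul_comm ((rodrigues n).eval _)]
    exact integral_rodrigues_mul_eq_zero (by rw [degree_rodrigues]; exact_mod_cast h)

noncomputable def legendreCoeff (f : ℝ → ℝ) (n : ℕ) : ℝ :=
  (∫ x in (-1 : ℝ)..1, f x * (rodrigues n).eval x) / ∫ x in (-1 : ℝ)..1, (rodrigues n).eval x ^ 2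

noncomputable def legendreProjection (f : ℝ → ℝ) (k : ℕ) : ℝ[X] :=
  ∑ n ∈ Finset.range (k + 1), legendreCoeff f n • rodrigues n

theorem degree_legendreProjection_le (f : ℝ → ℝ) (k : ℕ) : (legendreProjection f k).degree ≤ k :=
  (degree_sum_le _ _).trans <| Finset.sup_le fun n hn ↦
    (degree_smul_le _ _).trans <| by
      rw [degree_rodrigues]
      exact_mod_cast Finset.mem_range_succ_iff.mp hn

theorem integral_legendreProjection_mul_rodrigues (f : ℝ → ℝ) {k m : ℕ} (hm : m ≤ k) :
    ∫ x in (-1 : ℝ)..1, (legendreProjection f k).eval x * (rodrigues m).eval x =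
      ∫ x in (-1 : ℝ)..1, f x * (rodrigues m).eval x := by
  simp only [legendreProjection, eval_finsetSum, eval_smul, smul_eq_mul, Finset.sum_mul, mul_assoc]
  rw [intervalIntegral.integral_finsetSum fun n _ ↦ Continuous.intervalIntegrable (by fun_prop) _ _,
    Finset.sum_eq_single_of_mem m (Finset.mem_range_succ_iff.mpr hm) fun n _ hn ↦ by
      rw [intervalIntegral.integral_const_mul, integral_rodrigues_mul_rodrigues hn.symm, mul_zero]]
  simp_rw [intervalIntegral.integral_const_mul, ← sq, legendreCoeff]
  exact div_mul_cancel₀ _ (integral_rodrigues_sq_pos m).ne'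

theorem integral_sub_legendreProjection_mul_eq_zero {f : ℝ → ℝ} (hf : Continuous f) (k : ℕ)
    {v : ℝ[X]} (hv : v.degree ≤ k) :
    ∫ x in (-1 : ℝ)..1, (f x - (legendreProjection f k).eval x) * v.eval x = 0 := by
  refine integral_mul_eval_eq_zero_of_degree_lt (by fun_prop) degree_rodrigues (d := k + 1)
    (fun m hm ↦ ?_) (hv.trans_lt (by exact_mod_cast k.lt_succ_self))
  simp_rw [sub_mul]
  rw [intervalIntegral.integral_sub (Continuous.intervalIntegrable (by fun_prop) _ _)
    (Continuous.intervalIntegrable (by fun_prop) _ _),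
    integral_legendreProjection_mul_rodrigues f (Nat.lt_succ_iff.mp hm), sub_self]

theorem sq_legendreCoeff_mul_eval_rodrigues_le {f : ℝ → ℝ} (hf : Continuous f) (n : ℕ) {z : ℝ}
    (hz : z ∈ Icc (-1 : ℝ) 1) :
    (legendreCoeff f n * (rodrigues n).eval z) ^ 2 ≤
      (∫ x in (-1 : ℝ)..1, f x ^ 2) * ((2 * n + 1) * (n + 1) / 2) := by
  set A := ∫ x in (-1 : ℝ)..1, f x ^ 2
  set B := ∫ x in (-1 : ℝ)..1, f x * (rodrigues n).eval x
  set N := ∫ x in (-1 : ℝ)..1, (rodrigues n).eval x ^ 2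
  have hN : 0 < N := integral_rodrigues_sq_pos n
  have hA : 0 ≤ A := intervalIntegral.integral_nonneg (by norm_num) fun x _ ↦ sq_nonneg _
  have hB : B ^ 2 ≤ A * N :=
    sq_intervalIntegral_mul_le hf (rodrigues n).continuous (by norm_num)
  have hR : (rodrigues n).eval z ^ 2 ≤ (2 * n + 1) * (2 * n)! :=
    (sq_eval_rodrigues_le n hz).trans (sq_factorial_mul_two_pow_le n)
  have hN_ge : (2 * n)! * (2 / (n + 1)) ≤ N := by
    rw [show N = _ from integral_rodrigues_sq n]
    exact mul_le_mul_of_nonneg_left (two_div_succ_le_integral_one_sub_sq_pow n) (by positivity)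
  calc (legendreCoeff f n * (rodrigues n).eval z) ^ 2
      = B ^ 2 * (rodrigues n).eval z ^ 2 / N ^ 2 := by rw [legendreCoeff]; ring
    _ ≤ A * N * ((2 * n + 1) * (2 * n)!) / N ^ 2 := by gcongr
    _ = A * ((2 * n + 1) * (2 * n)!) / N := by field_simp
    _ ≤ A * ((2 * n + 1) * (2 * n)!) / ((2 * n)! * (2 / (n + 1))) := by gcongr
    _ = A * ((2 * n + 1) * (n + 1) / 2) := by field_simp

theorem integral_max_zero_sq : ∫ x in (-1 : ℝ)..1, max x 0 ^ 2 = 1 / 3 := by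
  rw [← intervalIntegral.integral_add_adjacent_intervals (b := 0)
    (Continuous.intervalIntegrable (by fun_prop) _ _)
    (Continuous.intervalIntegrable (by fun_prop) _ _)]
  have hneg : ∫ x in (-1 : ℝ)..0, max x 0 ^ 2 = 0 := by
    rw [intervalIntegral.integral_congr (g := fun _ ↦ 0) fun x hx ↦ by
      rw [uIcc_of_le (by norm_num)] at hx
      simp [max_eq_right hx.2]]
    simp
  have hpos : ∫ x in (0 : ℝ)..1, max x 0 ^ 2 = 1 / 3 := by
    rw [intervalIntegral.integral_congr (g := fun x ↦ x ^ 2) fun x hx ↦ by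
      rw [uIcc_of_le (by norm_num)] at hx
      simp [max_eq_left hx.1]]
    norm_num [integral_pow]
  rw [hneg, hpos, zero_add]

theorem abs_eval_legendreProjection_max_zero_le (k : ℕ) {z : ℝ} (hz : z ∈ Icc (-1 : ℝ) 1) :
    |(legendreProjection (fun x ↦ max x 0) k).eval z| ≤ (k + 1) ^ 2 / 2 := by
  have hterm (n : ℕ) :
      |legendreCoeff (fun x ↦ max x 0) n * (rodrigues n).eval z| ≤ n + 1 / 2 := by
    have h := sq_legendreCoeff_mul_eval_rodrigues_le (f := fun x ↦ max x 0) (by fun_prop) n hz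
    rw [integral_max_zero_sq] at h
    have hn : (0 : ℝ) ≤ n := n.cast_nonneg
    exact abs_le_of_sq_le_sq (h.trans (by nlinarith)) (by positivity)
  have hsum (m : ℕ) : ∑ n ∈ Finset.range m, ((n : ℝ) + 1 / 2) = m ^ 2 / 2 := by
    induction m with
    | zero => simp
    | succ m ih => rw [Finset.sum_range_succ, ih]; push_cast; ring
  simp only [legendreProjection, eval_finsetSum, eval_smul, smul_eq_mul]
  calc _ ≤ ∑ n ∈ Finset.range (k + 1), |legendreCoeff (fun x ↦ max x 0) n * (rodrigues n).eval z| :=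
        Finset.abs_sum_le_sum_abs _ _
    _ ≤ ∑ n ∈ Finset.range (k + 1), ((n : ℝ) + 1 / 2) := Finset.sum_le_sum fun n _ ↦ hterm n
    _ = (k + 1) ^ 2 / 2 := by rw [hsum]; push_cast; ring

/-- For every `k ≥ 1` there is a polynomial `p` of degree at most `k` such that
`ReLU - p` is orthogonal on `[-1, 1]` (Lebesgue measure) to `z^t` for all `0 ≤ t ≤ k`,
and `|p(z)| ≤ 2k²` on `[-1, 1]`. -/
theorem stmt14 (k : ℕ) (hk : 0 < k) :
    ∃ p : Polynomial ℝ, p.degree ≤ k ∧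
      (∀ t : ℕ, t ≤ k → ∫ z in (-1 : ℝ)..1, (max z 0 - p.eval z) * z ^ t = 0) ∧
      ∀ z ∈ Set.Icc (-1 : ℝ) 1, |p.eval z| ≤ 2 * (k : ℝ) ^ 2 := by
  refine ⟨legendreProjection (fun x ↦ max x 0) k, degree_legendreProjection_le _ k,
    fun t ht ↦ ?_, fun z hz ↦ ?_⟩
  · have hdeg : (X ^ t : ℝ[X]).degree ≤ k := by rw [degree_X_pow]; exact_mod_cast ht
    simpa using integral_sub_legendreProjection_mul_eq_zero (by fun_prop) k hdeg
  · have hk1 : (1 : ℝ) ≤ k := by exact_mod_cast hk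
    exact (abs_eval_legendreProjection_max_zero_le k hz).trans (by nlinarith)
end

section
/- There exist absolute constants c > 0 and C > 0 such that for every integer k ≥ 1 and every polynomial p of degree at most k, ∫_{−1}^{1} (ReLU(z) − p(z))² dz ≥ c·k^{−C}. -/
/-!
Let `Qₙ = Dⁿ (1 - x²)ⁿ`, the Legendre polynomial up to normalization. Integrating by parts
`n` times, `Qₙ` is orthogonal on `[-1, 1]` to every polynomial of degree `< n`, and
`‖Qₙ‖² = (2n)! ∫ (1 - x²)ⁿ ≤ 2 (2n)!`. Hence for `deg p < n` the inner product of `ReLU - p`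
with `Qₙ` is that of `ReLU` alone, which two more integrations by parts turn into
`D^(n-2) (1 - x²)ⁿ` at `0`: for `n = 2m + 2` this is `± (2m)! (n choose m)`. Cauchy–Schwarz
then bounds `‖ReLU - p‖²` below by `((2m)! (n choose m))² / (2 (2n)!)`, and the estimates
`(2n)! ≤ 4ⁿ (n!)²` and `2ⁿ ≤ 2 (m + 2) (n choose m)` make this at least `1 / (8 (n + 1)⁶)`.
-/

open MeasureTheory intervalIntegral Polynomial Real
open scoped Nat

namespace ReluApprox

theorem sq_integral_mul_le {f g : ℝ → ℝ} {a b : ℝ} (hab : a ≤ b) (hf : Continuous f)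
    (hg : Continuous g) :
    (∫ x in a..b, f x * g x) ^ 2 ≤ (∫ x in a..b, f x ^ 2) * ∫ x in a..b, g x ^ 2 := by
  have hquad : ∀ t : ℝ, 0 ≤ (∫ x in a..b, g x ^ 2) * (t * t)
      + 2 * (∫ x in a..b, f x * g x) * t + ∫ x in a..b, f x ^ 2 := by
    intro t
    have hsq : ∫ x in a..b, (t * g x + f x) ^ 2 = (∫ x in a..b, g x ^ 2) * (t * t)
        + 2 * (∫ x in a..b, f x * g x) * t + ∫ x in a..b, f x ^ 2 := by
      have hexpand : (fun x => (t * g x + f x) ^ 2)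
          = fun x => (t * t) * g x ^ 2 + (2 * t) * (f x * g x) + f x ^ 2 := by
        ext x; ring
      rw [hexpand, intervalIntegral.integral_add, intervalIntegral.integral_add,
        intervalIntegral.integral_const_mul, intervalIntegral.integral_const_mul]
      · ring
      all_goals exact Continuous.intervalIntegrable (by fun_prop) _ _
    rw [← hsq]
    exact integral_nonneg hab fun x _ => sq_nonneg _
  have := discrim_le_zero hquad
  rw [discrim] at this
  linarith

theorem integral_max_zero_mul {f : ℝ → ℝ} (hf : Continuous f) {a b : ℝ} (ha : a ≤ 0)
    (hb : 0 ≤ b) : ∫ x in a..b, max x 0 * f x = ∫ x in (0 : ℝ)..b, x * f x := by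
  have hint : ∀ c d : ℝ, IntervalIntegrable (fun x => max x 0 * f x) volume c d :=
    fun c d => Continuous.intervalIntegrable (by fun_prop) c d
  rw [← integral_add_adjacent_intervals (hint a 0) (hint 0 b)]
  have hneg : ∫ x in a..0, max x 0 * f x = 0 := by
    refine (integral_congr fun x hx => ?_).trans integral_zero
    rw [Set.uIcc_of_le ha] at hx
    simp [max_eq_right hx.2]
  have hpos : ∫ x in (0 : ℝ)..b, max x 0 * f x = ∫ x in (0 : ℝ)..b, x * f x := by
    refine integral_congr fun x hx => ?_
    rw [Set.uIcc_of_le hb] at hx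
    simp [max_eq_left hx.1]
  rw [hneg, hpos, zero_add]

theorem integral_mul_iterate_derivative (p F : ℝ[X]) {a b : ℝ} {j : ℕ}
    (ha : ∀ i < j, (derivative^[i] F).IsRoot a) (hb : ∀ i < j, (derivative^[i] F).IsRoot b) :
    ∫ x in a..b, p.eval x * (derivative^[j] F).eval x =
      (-1) ^ j * ∫ x in a..b, (derivative^[j] p).eval x * F.eval x := by
  induction j generalizing p with
  | zero => simp
  | succ j ih =>
    rw [Function.iterate_succ_apply', integral_mul_deriv_eq_deriv_mul
      (fun x _ => p.hasDerivAt x) (fun x _ => (derivative^[j] F).hasDerivAt x)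
      (p.derivative.continuous.intervalIntegrable a b)
      ((derivative (derivative^[j] F)).continuous.intervalIntegrable a b),
      (ha j j.lt_succ_self).eq_zero, (hb j j.lt_succ_self).eq_zero,
      ih (derivative p) (fun i hi => ha i (hi.trans j.lt_succ_self))
        (fun i hi => hb i (hi.trans j.lt_succ_self)), ← Function.iterate_succ_apply]
    ring

theorem integral_mul_derivative_derivative (G : ℝ[X]) (a b : ℝ) :
    ∫ x in a..b, x * (derivative (derivative G)).eval x =
      b * (derivative G).eval b - a * (derivative G).eval a - (G.eval b - G.eval a) := by
  rw [integral_mul_deriv_eq_deriv_mul (fun x _ => hasDerivAt_id' x)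
    (fun x _ => G.derivative.hasDerivAt x) intervalIntegrable_const
    ((derivative (derivative G)).continuous.intervalIntegrable a b)]
  simp only [one_mul]
  rw [integral_eq_sub_of_hasDerivAt (fun x _ => G.hasDerivAt x)
    (G.derivative.continuous.intervalIntegrable a b)]

noncomputable def bump (n : ℕ) : ℝ[X] := (1 - X ^ 2) ^ n

noncomputable def rodrigues (n : ℕ) : ℝ[X] := derivative^[n] (bump n)

theorem eval_bump (n : ℕ) (x : ℝ) : (bump n).eval x = (1 - x ^ 2) ^ n := by
  simp [bump]

theorem bump_ne_zero (n : ℕ) : bump n ≠ 0 := fun h => by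
  simpa [eval_bump] using congrArg (eval 0) h

theorem isRoot_iterate_derivative_bump {n i : ℕ} (hi : i < n) {s : ℝ} (hs : s ^ 2 = 1) :
    (derivative^[i] (bump n)).IsRoot s := by
  have hdvd : (X - C s) ^ n ∣ bump n :=
    pow_dvd_pow_of_dvd (dvd_iff_isRoot.2 (by simp [hs])) n
  exact isRoot_iterate_derivative_of_lt_rootMultiplicity
    (hi.trans_le ((le_rootMultiplicity_iff (bump_ne_zero n)).2 hdvd))

theorem coeff_bump_two_mul (n j : ℕ) : (bump n).coeff (2 * j) = (-1) ^ j * n.choose j := by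
  have hsum :
      bump n = ∑ k ∈ Finset.range (n + 1), C ((-1 : ℝ) ^ k * n.choose k) * X ^ (2 * k) := by
    rw [bump, sub_eq_add_neg, add_comm, add_pow]
    refine Finset.sum_congr rfl fun k _ => ?_
    rw [one_pow, mul_one, neg_pow, ← pow_mul, C_mul, C_pow, C_neg, C_1, ← C_eq_natCast]
    ring
  rw [hsum, finsetSum_coeff, Finset.sum_eq_single j]
  · rw [coeff_C_mul_X_pow, if_pos rfl]
  · intro k _ hkj
    rw [coeff_C_mul_X_pow, if_neg (by omega)]
  · intro hj
    rw [Nat.choose_eq_zero_of_lt (by simpa using hj)]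
    simp

theorem eval_zero_iterate_derivative_bump (n j : ℕ) :
    (derivative^[2 * j] (bump n)).eval 0 = (-1) ^ j * (2 * j)! * n.choose j := by
  rw [← coeff_zero_eq_eval_zero, coeff_iterate_derivative, zero_add, Nat.descFactorial_self,
    coeff_bump_two_mul, nsmul_eq_mul]
  ring

theorem natDegree_bump (n : ℕ) : (bump n).natDegree = 2 * n := by
  rw [bump, natDegree_pow, show (1 : ℝ[X]) - X ^ 2 = -(X ^ 2 - C 1) by simp, natDegree_neg,
    natDegree_X_pow_sub_C, mul_comm]

theorem iterate_derivative_two_mul_bump (n : ℕ) :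
    derivative^[2 * n] (bump n) = C ((-1 : ℝ) ^ n * (2 * n)!) := by
  have hdeg : (derivative^[2 * n] (bump n)).natDegree = 0 := by
    have := natDegree_iterate_derivative (bump n) (2 * n)
    rw [natDegree_bump, Nat.sub_self] at this
    omega
  rw [eq_C_of_natDegree_eq_zero hdeg, coeff_zero_eq_eval_zero,
    eval_zero_iterate_derivative_bump, Nat.choose_self, Nat.cast_one, mul_one]

theorem integral_mul_rodrigues (p : ℝ[X]) (n : ℕ) :
    ∫ x in (-1 : ℝ)..1, p.eval x * (rodrigues n).eval x =
      (-1) ^ n * ∫ x in (-1 : ℝ)..1, (derivative^[n] p).eval x * (bump n).eval x :=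
  integral_mul_iterate_derivative p (bump n)
    (fun _ hi => isRoot_iterate_derivative_bump hi (by norm_num))
    (fun _ hi => isRoot_iterate_derivative_bump hi (by norm_num))

theorem integral_mul_rodrigues_eq_zero {p : ℝ[X]} {n : ℕ} (hp : p.natDegree < n) :
    ∫ x in (-1 : ℝ)..1, p.eval x * (rodrigues n).eval x = 0 := by
  simp [integral_mul_rodrigues, iterate_derivative_eq_zero hp]

theorem integral_rodrigues_sq (n : ℕ) :
    ∫ x in (-1 : ℝ)..1, (rodrigues n).eval x ^ 2 =
      (2 * n)! * ∫ x in (-1 : ℝ)..1, (bump n).eval x := by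
  have hD : derivative^[n] (rodrigues n) = C ((-1 : ℝ) ^ n * (2 * n)!) := by
    rw [rodrigues, ← Function.iterate_add_apply, ← two_mul, iterate_derivative_two_mul_bump]
  simp only [sq, integral_mul_rodrigues, hD, eval_C, intervalIntegral.integral_const_mul]
  rw [← mul_assoc, ← mul_assoc, ← pow_add, ← two_mul, pow_mul]
  norm_num

theorem integral_bump_le_two (n : ℕ) : ∫ x in (-1 : ℝ)..1, (bump n).eval x ≤ 2 := by
  have hle : ∫ x in (-1 : ℝ)..1, (bump n).eval x ≤ ∫ _ in (-1 : ℝ)..1, (1 : ℝ) := by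
    refine integral_mono_on (by norm_num) ((bump n).continuous.intervalIntegrable _ _)
      intervalIntegrable_const fun x hx => ?_
    rw [eval_bump]
    exact pow_le_one₀ (by nlinarith [hx.1, hx.2]) (by nlinarith)
  norm_num at hle
  linarith

theorem integral_max_zero_mul_rodrigues (n : ℕ) :
    ∫ x in (-1 : ℝ)..1, max x 0 * (rodrigues (n + 2)).eval x =
      (derivative^[n] (bump (n + 2))).eval 0 := by
  have hroot : ∀ i < n + 2, (derivative^[i] (bump (n + 2))).eval 1 = 0 := fun i hi =>
    (isRoot_iterate_derivative_bump hi (by norm_num)).eq_zero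
  rw [integral_max_zero_mul (rodrigues (n + 2)).continuous (by norm_num) zero_le_one, rodrigues,
    Function.iterate_succ_apply', Function.iterate_succ_apply',
    integral_mul_derivative_derivative, ← Function.iterate_succ_apply' derivative,
    hroot (n + 1) (by omega), hroot n (by omega)]
  ring

theorem four_pow_succ_le_choose (m : ℕ) : 4 ^ (m + 1) ≤ 2 * (m + 2) * (2 * m + 2).choose m := by
  have hcentral := Nat.four_pow_le_two_mul_self_mul_centralBinom (m + 1) m.succ_pos
  have hshift := Nat.choose_succ_right_eq (2 * m + 2) m
  rw [show 2 * m + 2 - m = m + 2 by omega] at hshift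
  rw [Nat.centralBinom_eq_two_mul_choose, show 2 * (m + 1) = 2 * m + 2 by ring] at hcentral
  calc 4 ^ (m + 1) ≤ 2 * (m + 1) * (2 * m + 2).choose (m + 1) := hcentral
    _ = 2 * (m + 2) * (2 * m + 2).choose m := by linear_combination 2 * hshift

theorem two_mul_factorial_le (m : ℕ) :
    2 * (4 * m + 4)! ≤ 8 * (2 * m + 3) ^ 6 * ((2 * m)! * (2 * m + 2).choose m) ^ 2 := by
  set n := 2 * m + 2
  have hfac : (4 * m + 4)! = (n + n).choose n * n ! * n ! := by
    rw [Nat.add_choose_mul_factorial_mul_factorial]; congr 1; omega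
  have hcentral : (n + n).choose n ≤ (2 * (m + 2) * (2 * m + 2).choose m) ^ 2 := by
    rw [← two_mul, ← Nat.centralBinom_eq_two_mul_choose]
    calc n.centralBinom ≤ 4 ^ n := Nat.centralBinom_le_four_pow n
      _ = (4 ^ (m + 1)) ^ 2 := by rw [← pow_mul]; congr 1; omega
      _ ≤ _ := by gcongr; exact four_pow_succ_le_choose m
  have hn : n ! = (2 * m + 2) * (2 * m + 1) * (2 * m)! := by
    simp only [n, Nat.factorial_succ]; ring
  have hpoly : (m + 2) ^ 2 * ((2 * m + 2) * (2 * m + 1)) ^ 2 ≤ (2 * m + 3) ^ 6 := by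
    have h1 : m + 2 ≤ 2 * m + 3 := by omega
    have h2 : (2 * m + 2) * (2 * m + 1) ≤ (2 * m + 3) ^ 2 := by nlinarith
    calc (m + 2) ^ 2 * ((2 * m + 2) * (2 * m + 1)) ^ 2
        ≤ (2 * m + 3) ^ 2 * ((2 * m + 3) ^ 2) ^ 2 := by gcongr
      _ = (2 * m + 3) ^ 6 := by ring
  calc 2 * (4 * m + 4)! ≤ 2 * (2 * (m + 2) * (2 * m + 2).choose m) ^ 2 * n ! * n ! := by
        rw [hfac, mul_assoc 2, mul_assoc 2]; gcongr
    _ = 8 * ((m + 2) ^ 2 * ((2 * m + 2) * (2 * m + 1)) ^ 2) *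
          ((2 * m)! * (2 * m + 2).choose m) ^ 2 := by
        rw [hn]; ring
    _ ≤ _ := by gcongr

theorem one_le_integral_relu_sub_sq_mul {m : ℕ} {p : ℝ[X]} (hp : p.natDegree < 2 * m + 2) :
    1 ≤ (∫ x in (-1 : ℝ)..1, (max x 0 - p.eval x) ^ 2) * (8 * (2 * m + 3) ^ 6) := by
  set I := ∫ x in (-1 : ℝ)..1, (max x 0 - p.eval x) ^ 2
  set A : ℝ := (2 * m)! * (2 * m + 2).choose m
  have hA : 0 < A := by
    have := Nat.choose_pos (show m ≤ 2 * m + 2 by omega)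
    positivity
  have hI : 0 ≤ I := integral_nonneg (by norm_num) fun x _ => sq_nonneg _
  have hmoment : ∫ x in (-1 : ℝ)..1, (max x 0 - p.eval x) * (rodrigues (2 * m + 2)).eval x =
      (-1) ^ m * A := by
    simp only [sub_mul]
    rw [intervalIntegral.integral_sub (Continuous.intervalIntegrable (by fun_prop) _ _)
      (Continuous.intervalIntegrable (by fun_prop) _ _), integral_max_zero_mul_rodrigues,
      eval_zero_iterate_derivative_bump, integral_mul_rodrigues_eq_zero hp, sub_zero, mul_assoc]
  have hnorm : ∫ x in (-1 : ℝ)..1, (rodrigues (2 * m + 2)).eval x ^ 2 ≤ 2 * (4 * m + 4)! := by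
    rw [integral_rodrigues_sq, show 2 * (2 * m + 2) = 4 * m + 4 by ring]
    exact (mul_le_mul_of_nonneg_left (integral_bump_le_two _) (Nat.cast_nonneg _)).trans_eq
      (mul_comm _ _)
  have hfac : (2 * (4 * m + 4)! : ℝ) ≤ 8 * (2 * m + 3) ^ 6 * A ^ 2 := by
    simp only [A]
    exact_mod_cast two_mul_factorial_le m
  have hcs := sq_integral_mul_le (f := fun x => max x 0 - p.eval x) (a := -1) (b := 1)
    (by norm_num) (by fun_prop) (rodrigues (2 * m + 2)).continuous
  rw [hmoment, mul_pow, ← pow_mul, pow_mul', neg_one_sq, one_pow, one_mul] at hcs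
  have hscaled : A ^ 2 * 1 ≤ A ^ 2 * (I * (8 * (2 * m + 3) ^ 6)) :=
    calc A ^ 2 * 1 = A ^ 2 := mul_one _
      _ ≤ I * ∫ x in (-1 : ℝ)..1, (rodrigues (2 * m + 2)).eval x ^ 2 := hcs
      _ ≤ I * (2 * (4 * m + 4)!) := by gcongr
      _ ≤ I * (8 * (2 * m + 3) ^ 6 * A ^ 2) := by gcongr
      _ = A ^ 2 * (I * (8 * (2 * m + 3) ^ 6)) := by ring
  exact le_of_mul_le_mul_left hscaled (by positivity)

end ReluApprox

open ReluApprox in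
/-- There are absolute constants `c, C > 0` such that every polynomial `p` of degree at
most `k` satisfies `∫_{-1}^{1} (ReLU(z) - p(z))² dz ≥ c k^(-C)`. -/
theorem stmt15 :
    ∃ c C : ℝ, 0 < c ∧ 0 < C ∧ ∀ k : ℕ, 0 < k → ∀ p : Polynomial ℝ, p.degree ≤ k →
      c * (k : ℝ) ^ (-C) ≤ ∫ z in (-1 : ℝ)..1, (max z 0 - p.eval z) ^ 2 := by
  refine ⟨1 / 32768, 6, by norm_num, by norm_num, fun k hk p hp => ?_⟩
  set I := ∫ z in (-1 : ℝ)..1, (max z 0 - p.eval z) ^ 2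
  have hI : 0 ≤ I := integral_nonneg (by norm_num) fun x _ => sq_nonneg _
  have hdeg : p.natDegree < 2 * (k / 2) + 2 :=
    (natDegree_le_iff_degree_le.2 hp).trans_lt (by omega)
  have hk : (0 : ℝ) < k := by exact_mod_cast hk
  have hm : (2 * (k / 2 : ℕ) + 3 : ℝ) ≤ 4 * k := by
    exact_mod_cast (by omega : 2 * (k / 2) + 3 ≤ 4 * k)
  rw [rpow_neg hk.le, show (6 : ℝ) = (6 : ℕ) by norm_num, rpow_natCast, one_div, ← mul_inv,
    inv_le_iff_one_le_mul₀' (by positivity)]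
  calc 1 ≤ I * (8 * (2 * (k / 2 : ℕ) + 3) ^ 6) := one_le_integral_relu_sub_sq_mul hdeg
    _ ≤ I * (8 * (4 * k) ^ 6) := by gcongr
    _ = 32768 * k ^ 6 * I := by ring
end
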